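/- arXiv:2207.02588 — 10 statements merged into one kernel-verified Lean document; each statement's English description precedes it below -/
import Mathlib

section
/- Let X_t be an irreducible continuous-time Markov chain on a finite set V with jump rates R(x,y), stationary distribution π, and holding rates λ. For nonempty disjoint subsets A, B of V define the capacity Cap(A,B) = Σ_{x∈A} π(x) λ(x) P_x[H_B < H_A^+], where H_B is the hitting time of B and H_A^+ the return time to A. Define the conductance of an edge c(x,y) = π(x) R(x,y), and for a self-avoiding path γ = (x_0,...,x_m) with R(x_i,x_{i+1})>0 set c(γ) = min_i c(x_i,x_{i+1}); let c(A,B) be the maximum of c(γ) over self-avoiding paths γ from A to B. Then, assuming the chain is reversible, there exists a constant C_1 ≥ 1, depending only on the number of edges |E|, such that C_1^{-1} ≤ Cap(A,B)/c(A,B) ≤ C_1 for all nonempty disjoint A, B ⊂ V. -/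
open Finset Filter Topology

noncomputable section

/-- Generator of a continuous-time Markov chain with jump rates `R`. -/
def gen {V : Type*} [Fintype V] (R : V → V → ℝ) (f : V → ℝ) (x : V) : ℝ :=
  ∑ y, R x y * (f y - f x)

/-- Generator of a chain restricted to the subset `W` (e.g. a trace process). -/
def genOn {V : Type*} [Fintype V] [DecidableEq V] (W : Finset V) (R : V → V → ℝ)
    (f : V → ℝ) (x : V) : ℝ :=
  ∑ y ∈ W, R x y * (f y - f x)

/-- Detailed balance (reversibility) of `π` for the rates `R`. -/
def Reversible {V : Type*} (R : V → V → ℝ) (π : V → ℝ) : Prop :=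
  ∀ x y, π x * R x y = π y * R y x

/-- Stationarity of `π` for the rates `R`. -/
def Stationary {V : Type*} [Fintype V] (R : V → V → ℝ) (π : V → ℝ) : Prop :=
  ∀ y, ∑ x, π x * R x y = π y * ∑ z, R y z

/-- Irreducibility of the rates `R`. -/
def Irred {V : Type*} (R : V → V → ℝ) : Prop :=
  ∀ x y : V, Relation.ReflTransGen (fun a b => 0 < R a b) x y

/-- `h` is the equilibrium potential `h(x) = P_x[H_A < H_B]` : it equals `1` on `A`,
`0` on `B` and is harmonic elsewhere. -/
def IsEqPotential {V : Type*} [Fintype V] (R : V → V → ℝ) (A B : Finset V)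
    (h : V → ℝ) : Prop :=
  (∀ x ∈ A, h x = 1) ∧ (∀ x ∈ B, h x = 0) ∧ ∀ x, x ∉ A → x ∉ B → gen R h x = 0

/-- The capacity `Cap(A,B) = ∑_{x∈A} π(x) λ(x) P_x[H_B < H_A⁺]`, expressed through the
equilibrium potential `h = h_{A,B}` as `-∑_{x∈A} π(x) (L h)(x)`. -/
def capFor {V : Type*} [Fintype V] (R : V → V → ℝ) (π : V → ℝ) (A : Finset V)
    (h : V → ℝ) : ℝ :=
  ∑ x ∈ A, π x * (-(gen R h x))

/-- The set of costs `c(γ) = min_i π(x_i) R(x_i,x_{i+1})` over self-avoiding paths `γ`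
from `A` to `B` along edges with positive rate. -/
def pathCosts {V : Type*} (R : V → V → ℝ) (π : V → ℝ) (A B : Finset V) : Set ℝ :=
  { r | ∃ γ : List V, γ.Nodup ∧ γ.Chain' (fun a b => 0 < R a b) ∧
      (∃ x ∈ A, γ.head? = some x) ∧ (∃ y ∈ B, γ.getLast? = some y) ∧
      IsLeast {c | c ∈ List.zipWith (fun a b => π a * R a b) γ γ.tail} r }

/-!
By Green's identity and reversibility the capacity is the Dirichlet energy `D(h)` of the
equilibrium potential, and by the Dirichlet principle `D(h) ≤ D(f)` for every `f` equal to `1`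
on `A` and to `0` on `B`.

Lower bound: along an optimal path from `A` to `B` the potential drops by `1` in at most `|V|`
steps, so one edge of the path, of conductance at least `c(A,B)`, carries a drop of at least
`1/|V|` and alone contributes `c(A,B)/|V|²` to `2 D(h)`.

Upper bound: the set `S` of vertices reachable from `A` through edges of conductance `> c(A,B)`
misses `B` by maximality of `c(A,B)`, so the indicator of `S` is admissible, and each edge
leaving or entering `S` has conductance at most `c(A,B)`; hence `D(h) ≤ |V|² c(A,B) / 2`.
-/

namespace List

theorem IsChain.rel_of_mem_zip_tail {α : Type*} {r : α → α → Prop} :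
    ∀ {l : List α}, l.IsChain r → ∀ p ∈ l.zip l.tail, r p.1 p.2
  | [], _, _, hp => by simp at hp
  | [_], _, _, hp => by simp at hp
  | a :: b :: l, hl, p, hp => by
    rw [isChain_cons_cons] at hl
    rw [tail_cons, zip_cons_cons, mem_cons] at hp
    rcases hp with rfl | hp
    · exact hl.1
    · exact hl.2.rel_of_mem_zip_tail p hp

theorem sum_map_sub_zip_tail {α G : Type*} [AddCommGroup G] (g : α → G) :
    ∀ {l : List α} {a b : α}, l.head? = some a → l.getLast? = some b →
      ((l.zip l.tail).map fun p => g p.1 - g p.2).sum = g a - g b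
  | [], _, _, ha, _ => by simp at ha
  | [x], _, _, ha, hb => by simp_all
  | x :: y :: l, a, b, ha, hb => by
    obtain rfl : x = a := by simpa using ha
    rw [getLast?_cons_cons] at hb
    have htail := sum_map_sub_zip_tail g (l := y :: l) rfl hb
    rw [tail_cons] at htail
    rw [tail_cons, zip_cons_cons, map_cons, sum_cons, htail]
    abel

theorem zipWith_tail_ne_nil {α β : Type*} (f : α → α → β) :
    ∀ {l : List α} {a b : α}, l.head? = some a → l.getLast? = some b → a ≠ b →
      zipWith f l l.tail ≠ []
  | [], _, _, ha, _, _ => by simp at ha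
  | [_], _, _, ha, hb, hab => by simp_all
  | _ :: _ :: _, _, _, _, _, _ => by simp

theorem exists_mem_sum_map_le_length_nsmul {α M : Type*} [AddCommMonoid M] [LinearOrder M]
    [IsOrderedAddMonoid M] (g : α → M) {l : List α} (hl : l ≠ []) :
    ∃ x ∈ l, (l.map g).sum ≤ l.length • g x := by
  classical
  obtain ⟨x, hx, hmax⟩ := l.toFinset.exists_max_image g (toFinset_nonempty_iff l |>.2 hl)
  refine ⟨x, mem_toFinset.1 hx, ?_⟩
  simpa using sum_le_card_nsmul (l.map g) (g x)
    (by simpa using fun y hy => hmax y (mem_toFinset.2 hy))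

end List

section DirichletForm

variable {V : Type*} [Fintype V] {R : V → V → ℝ} {π : V → ℝ}

def dirichletForm (R : V → V → ℝ) (π : V → ℝ) (f g : V → ℝ) : ℝ :=
  (∑ x, ∑ y, π x * R x y * (f x - f y) * (g x - g y)) / 2

theorem sum_mul_neg_gen_eq_dirichletForm (hrev : Reversible R π) (f g : V → ℝ) :
    ∑ x, π x * f x * -gen R g x = dirichletForm R π f g := by
  have hswap : ∑ x, ∑ y, π x * R x y * f x * (g x - g y)
      = ∑ x, ∑ y, π x * R x y * f y * (g y - g x) := by
    rw [Finset.sum_comm]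
    exact sum_congr rfl fun x _ => sum_congr rfl fun y _ => by rw [hrev y x]
  have hsum : ∑ x, π x * f x * -gen R g x = ∑ x, ∑ y, π x * R x y * f x * (g x - g y) :=
    sum_congr rfl fun x _ => by
      rw [gen, ← sum_neg_distrib, mul_sum]
      exact sum_congr rfl fun y _ => by ring
  rw [dirichletForm, eq_div_iff two_ne_zero, hsum, mul_two]
  nth_rewrite 2 [hswap]
  rw [← sum_add_distrib]
  exact sum_congr rfl fun x _ => by rw [← sum_add_distrib]; exact sum_congr rfl fun y _ => by ring

theorem dirichletForm_self_nonneg (hR : ∀ x y, 0 ≤ R x y) (hπ : ∀ x, 0 ≤ π x) (f : V → ℝ) :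
    0 ≤ dirichletForm R π f f := by
  refine div_nonneg (sum_nonneg fun x _ => sum_nonneg fun y _ => ?_) zero_le_two
  rw [mul_assoc]
  exact mul_nonneg (mul_nonneg (hπ x) (hR x y)) (mul_self_nonneg _)

theorem dirichletForm_self_eq_add (f g : V → ℝ) :
    dirichletForm R π f f
      = dirichletForm R π g g + 2 * dirichletForm R π (f - g) g
        + dirichletForm R π (f - g) (f - g) := by
  simp only [dirichletForm, Pi.sub_apply, mul_div_assoc', ← add_div, mul_sum,
    ← sum_add_distrib]
  congr 1
  exact sum_congr rfl fun x _ => sum_congr rfl fun y _ => by ring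

theorem mul_sq_sub_le_two_mul_dirichletForm (hR : ∀ x y, 0 ≤ R x y) (hπ : ∀ x, 0 ≤ π x)
    (f : V → ℝ) (x y : V) :
    π x * R x y * (f x - f y) ^ 2 ≤ 2 * dirichletForm R π f f := by
  have hterm : ∀ u v, 0 ≤ π u * R u v * (f u - f v) * (f u - f v) := fun u v => by
    rw [mul_assoc]; exact mul_nonneg (mul_nonneg (hπ u) (hR u v)) (mul_self_nonneg _)
  rw [dirichletForm, mul_div_cancel₀ _ two_ne_zero, sq, ← mul_assoc]
  calc π x * R x y * (f x - f y) * (f x - f y)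
      ≤ ∑ v, π x * R x v * (f x - f v) * (f x - f v) :=
        single_le_sum (fun v _ => hterm x v) (mem_univ y)
    _ ≤ _ := single_le_sum (f := fun u => ∑ v, π u * R u v * (f u - f v) * (f u - f v))
        (fun u _ => sum_nonneg fun v _ => hterm u v) (mem_univ x)

end DirichletForm

section EquilibriumPotential

variable {V : Type*} [Fintype V] {R : V → V → ℝ} {π : V → ℝ} {A B : Finset V} {h : V → ℝ}

theorem IsEqPotential.sum_mul_mul_neg_gen_eq_zero (hh : IsEqPotential R A B h) {g : V → ℝ}
    (hgA : ∀ x ∈ A, g x = 0) (hgB : ∀ x ∈ B, g x = 0) :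
    ∑ x, π x * g x * -gen R h x = 0 :=
  sum_eq_zero fun x _ => by
    by_cases hxA : x ∈ A
    · simp [hgA x hxA]
    by_cases hxB : x ∈ B
    · simp [hgB x hxB]
    simp [hh.2.2 x hxA hxB]

theorem IsEqPotential.capFor_eq_dirichletForm (hrev : Reversible R π)
    (hh : IsEqPotential R A B h) : capFor R π A h = dirichletForm R π h h := by
  rw [← sum_mul_neg_gen_eq_dirichletForm hrev, capFor]
  calc ∑ x ∈ A, π x * -gen R h x = ∑ x ∈ A, π x * h x * -gen R h x :=
        sum_congr rfl fun x hx => by rw [hh.1 x hx, mul_one]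
    _ = ∑ x, π x * h x * -gen R h x := by
        refine sum_subset (subset_univ A) fun x _ hxA => ?_
        by_cases hxB : x ∈ B
        · simp [hh.2.1 x hxB]
        · simp [hh.2.2 x hxA hxB]

theorem IsEqPotential.dirichletForm_le (hrev : Reversible R π) (hR : ∀ x y, 0 ≤ R x y)
    (hπ : ∀ x, 0 ≤ π x) (hh : IsEqPotential R A B h) {f : V → ℝ}
    (hfA : ∀ x ∈ A, f x = 1) (hfB : ∀ x ∈ B, f x = 0) :
    dirichletForm R π h h ≤ dirichletForm R π f f := by
  have horth : dirichletForm R π (f - h) h = 0 := by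
    rw [← sum_mul_neg_gen_eq_dirichletForm hrev]
    exact hh.sum_mul_mul_neg_gen_eq_zero (fun x hx => by simp [hfA x hx, hh.1 x hx])
      (fun x hx => by simp [hfB x hx, hh.2.1 x hx])
  rw [dirichletForm_self_eq_add f h, horth]
  linarith [dirichletForm_self_nonneg hR hπ (f - h)]

end EquilibriumPotential

section PathCosts

open List

variable {V : Type*} {R : V → V → ℝ} {π : V → ℝ} {A B : Finset V}

theorem pos_of_mem_pathCosts (hπ : ∀ x, 0 < π x) {r : ℝ} (hr : r ∈ pathCosts R π A B) :
    0 < r := by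
  obtain ⟨γ, -, hchain, -, -, hleast⟩ := hr
  obtain ⟨p, hp, rfl⟩ := List.mem_map.1 (map_uncurry_zip_eq_zipWith ▸ hleast.1)
  exact mul_pos (hπ _) (hchain.rel_of_mem_zip_tail p hp)

theorem exists_lt_mem_pathCosts_of_reflTransGen (hrev : Reversible R π) (hπ : ∀ x, 0 < π x)
    {c : ℝ} (hc : 0 ≤ c) {a b : V} (ha : a ∈ A) (hb : b ∈ B) (hab : a ≠ b)
    (hreach : Relation.ReflTransGen (fun u v => c < π u * R u v) a b) :
    ∃ r ∈ pathCosts R π A B, c < r := by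
  classical
  set G := SimpleGraph.fromRel fun u v => c < π u * R u v
  have hadj : ∀ u v, G.Adj u v → c < π u * R u v := fun u v huv =>
    ((SimpleGraph.fromRel_adj _ u v).1 huv).2.elim id fun hvu => hrev u v ▸ hvu
  have hGreach : G.Reachable a b := by
    refine (SimpleGraph.reachable_iff_reflTransGen a b).2 (hreach.lift' id fun u v huv => ?_)
    by_cases h : u = v
    · exact h ▸ .refl
    · exact .single ((SimpleGraph.fromRel_adj _ u v).2 ⟨h, .inl huv⟩)
  obtain ⟨w⟩ := hGreach
  set p := w.toPath
  set γ := p.1.support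
  have hchain : γ.IsChain fun u v => c < π u * R u v := p.1.isChain_adj_support.imp hadj
  have hhead : γ.head? = some a := by
    rw [head?_eq_some_head p.1.support_ne_nil, SimpleGraph.Walk.head_support]
  have hlast : γ.getLast? = some b := by
    rw [getLast?_eq_some_getLast p.1.support_ne_nil, SimpleGraph.Walk.getLast_support]
  set costs := zipWith (fun u v => π u * R u v) γ γ.tail
  have hne : costs.toFinset.Nonempty :=
    (toFinset_nonempty_iff _).2 (zipWith_tail_ne_nil _ hhead hlast hab)
  have hgt : ∀ r ∈ costs, c < r := fun r hr => by
    rw [show costs = _ from map_uncurry_zip_eq_zipWith.symm] at hr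
    obtain ⟨q, hq, rfl⟩ := List.mem_map.1 hr
    exact hchain.rel_of_mem_zip_tail q hq
  refine ⟨costs.toFinset.min' hne, ⟨γ, p.2.support_nodup, ?_, ⟨a, ha, hhead⟩, ⟨b, hb, hlast⟩, ?_⟩,
    hgt _ (mem_toFinset.1 (Finset.min'_mem _ hne))⟩
  · exact hchain.imp fun u v huv => pos_of_mul_pos_right (hc.trans_lt huv) (hπ u).le
  · simpa using costs.toFinset.isLeast_min' hne

variable [Fintype V]

theorem le_two_mul_card_sq_mul_dirichletForm (hR : ∀ x y, 0 ≤ R x y) (hπ : ∀ x, 0 < π x)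
    {f : V → ℝ} (hfA : ∀ x ∈ A, f x = 1) (hfB : ∀ x ∈ B, f x = 0) {r : ℝ}
    (hr : r ∈ pathCosts R π A B) :
    r ≤ 2 * Fintype.card V ^ 2 * dirichletForm R π f f := by
  have hr0 := (pos_of_mem_pathCosts hπ hr).le
  obtain ⟨γ, hnodup, -, ⟨a, ha, hhead⟩, ⟨b, hb, hlast⟩, hleast⟩ := hr
  rw [← map_uncurry_zip_eq_zipWith] at hleast
  have hne : γ.zip γ.tail ≠ [] := fun hnil => by simpa [hnil] using hleast.1
  obtain ⟨p, hp, hdrop⟩ := exists_mem_sum_map_le_length_nsmul (fun p => f p.1 - f p.2) hne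
  rw [sum_map_sub_zip_tail f hhead hlast, hfA a ha, hfB b hb, sub_zero, nsmul_eq_mul] at hdrop
  have hlen : ((γ.zip γ.tail).length : ℝ) ≤ Fintype.card V := by
    rw [length_zip]
    exact_mod_cast (min_le_left _ _).trans hnodup.length_le_card
  have hcost : r ≤ π p.1 * R p.1 p.2 := hleast.2 (List.mem_map.2 ⟨p, hp, rfl⟩)
  calc r ≤ r * (((γ.zip γ.tail).length : ℝ) * (f p.1 - f p.2)) ^ 2 :=
        le_mul_of_one_le_right hr0 (one_le_pow₀ hdrop)
    _ = ((γ.zip γ.tail).length : ℝ) ^ 2 * (r * (f p.1 - f p.2) ^ 2) := by ring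
    _ ≤ Fintype.card V ^ 2 * (π p.1 * R p.1 p.2 * (f p.1 - f p.2) ^ 2) := by gcongr
    _ ≤ Fintype.card V ^ 2 * (2 * dirichletForm R π f f) := by
        have := mul_sq_sub_le_two_mul_dirichletForm hR (fun x => (hπ x).le) f p.1 p.2
        gcongr
    _ = 2 * Fintype.card V ^ 2 * dirichletForm R π f f := by ring

theorem dirichletForm_indicator_le (hrev : Reversible R π) {c : ℝ} (hc : 0 ≤ c) {S : Set V}
    (hS : ∀ x y, x ∈ S → c < π x * R x y → y ∈ S) :
    dirichletForm R π (S.indicator 1) (S.indicator 1) ≤ Fintype.card V ^ 2 * c / 2 := by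
  have hterm : ∀ x y, π x * R x y * (S.indicator 1 x - S.indicator 1 y)
      * (S.indicator 1 x - S.indicator 1 y) ≤ c := fun x y => by
    by_cases hx : x ∈ S <;> by_cases hy : y ∈ S <;> simp only [hx, hy, Set.indicator_of_mem,
      Set.indicator_of_notMem, not_false_eq_true, Pi.one_apply, sub_self, mul_zero, sub_zero,
      zero_sub, mul_one, mul_neg, neg_neg, hc]
    · exact not_lt.1 fun hlt => hy (hS x y hx hlt)
    · exact not_lt.1 fun hlt => hx (hS y x hy (hrev x y ▸ hlt))
  rw [dirichletForm, div_le_div_iff_of_pos_right two_pos]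
  calc _ ≤ ∑ _x : V, ∑ _y : V, c := sum_le_sum fun x _ => sum_le_sum fun y _ => hterm x y
    _ = Fintype.card V ^ 2 * c := by simp only [sum_const, card_univ, nsmul_eq_mul]; ring

theorem IsEqPotential.capFor_le_of_isGreatest (hrev : Reversible R π) (hR : ∀ x y, 0 ≤ R x y)
    (hπ : ∀ x, 0 < π x) (hAB : Disjoint A B) {h : V → ℝ} (hh : IsEqPotential R A B h) {c : ℝ}
    (hc : IsGreatest (pathCosts R π A B) c) :
    capFor R π A h ≤ Fintype.card V ^ 2 * c / 2 := by
  set S : Set V := {y | ∃ x ∈ A, Relation.ReflTransGen (fun u v => c < π u * R u v) x y}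
  have hc0 : 0 ≤ c := (pos_of_mem_pathCosts hπ hc.1).le
  have hSB : ∀ y ∈ B, y ∉ S := by
    rintro y hy ⟨x, hx, hxy⟩
    obtain ⟨r, hr, hlt⟩ := exists_lt_mem_pathCosts_of_reflTransGen hrev hπ hc0 hx hy
      (fun heq => Finset.disjoint_left.1 hAB hx (heq ▸ hy)) hxy
    exact (hc.2 hr).not_gt hlt
  have hSclosed : ∀ x y, x ∈ S → c < π x * R x y → y ∈ S := by
    rintro x y ⟨a, ha, hax⟩ hxy
    exact ⟨a, ha, hax.tail hxy⟩
  rw [hh.capFor_eq_dirichletForm hrev]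
  refine (hh.dirichletForm_le hrev hR (fun x => (hπ x).le) (f := S.indicator 1)
    (fun x hx => Set.indicator_of_mem (show x ∈ S from ⟨x, hx, .refl⟩) _)
    (fun y hy => Set.indicator_of_notMem (hSB y hy) _)).trans ?_
  exact dirichletForm_indicator_le hrev hc0 hSclosed

end PathCosts

theorem stmt0_general (V : Type*) [Fintype V] :
    ∃ C₁ : ℝ, 1 ≤ C₁ ∧
      ∀ (R : V → V → ℝ) (π : V → ℝ),
        (∀ x y, 0 ≤ R x y) → (∀ x, 0 < π x) → Irred R →
        Stationary R π → Reversible R π →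
        ∀ A B : Finset V, A.Nonempty → B.Nonempty → Disjoint A B →
        ∀ h : V → ℝ, IsEqPotential R A B h →
        ∀ cAB : ℝ, IsGreatest (pathCosts R π A B) cAB →
          C₁⁻¹ ≤ capFor R π A h / cAB ∧ capFor R π A h / cAB ≤ C₁ := by
  refine ⟨2 * Fintype.card V ^ 2 + 1, le_add_of_nonneg_left (by positivity), ?_⟩
  intro R π hR hπ _ _ hrev A B _ _ hAB h hh cAB hcAB
  have hc : 0 < cAB := pos_of_mem_pathCosts hπ hcAB.1
  have hcap : capFor R π A h = dirichletForm R π h h := hh.capFor_eq_dirichletForm hrev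
  have hcap0 : 0 ≤ capFor R π A h := hcap ▸ dirichletForm_self_nonneg hR (fun x => (hπ x).le) h
  have hlower : cAB ≤ 2 * Fintype.card V ^ 2 * capFor R π A h :=
    hcap ▸ le_two_mul_card_sq_mul_dirichletForm hR hπ hh.1 hh.2.1 hcAB.1
  have hupper : capFor R π A h ≤ Fintype.card V ^ 2 * cAB / 2 :=
    hh.capFor_le_of_isGreatest hrev hR hπ hAB hcAB
  constructor
  · rw [le_div_iff₀ hc, inv_mul_le_iff₀ (by positivity)]
    linarith
  · rw [div_le_iff₀ hc]
    nlinarith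

/-- for reversible irreducible chains on a finite set `V` there is a constant
`C₁ ≥ 1`, depending only on `V` (hence only on the number of edges), such that
`C₁⁻¹ ≤ Cap(A,B)/c(A,B) ≤ C₁` for all nonempty disjoint `A, B ⊆ V`. -/
theorem stmt0 (V : Type*) [Fintype V] [DecidableEq V] :
    ∃ C₁ : ℝ, 1 ≤ C₁ ∧
      ∀ (R : V → V → ℝ) (π : V → ℝ),
        (∀ x y, 0 ≤ R x y) → (∀ x, 0 < π x) → Irred R →
        Stationary R π → Reversible R π →
        ∀ A B : Finset V, A.Nonempty → B.Nonempty → Disjoint A B →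
        ∀ h : V → ℝ, IsEqPotential R A B h →
        ∀ cAB : ℝ, IsGreatest (pathCosts R π A B) cAB →
          C₁⁻¹ ≤ capFor R π A h / cAB ∧ capFor R π A h / cAB ≤ C₁ :=
  stmt0_general V
end
end

section
/- Let X_t be an irreducible reversible continuous-time Markov chain on a finite set V with stationary measure π. Let h_{A,B}(x) = P_x[H_A < H_B] be the equilibrium potential between two nonempty disjoint subsets A, B of V. Then there exists a finite constant C_0, depending only on the number of edges, such that for every x ∉ A ∪ B, h_{A,B}(x)^2 ≤ C_0 · Cap(A,B)/Cap({x},B). -/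
open Finset Filter Topology

noncomputable section

/-- The Dirichlet form `D(f) = ⟨f, (−L)f⟩_π`. -/
def dirichlet {V : Type*} [Fintype V] (R : V → V → ℝ) (π : V → ℝ) (f : V → ℝ) : ℝ :=
  ∑ x, π x * (f x * (-(gen R f x)))


/-! By reversibility the Dirichlet form is a weighted sum over edges of products of
gradients, hence a positive semidefinite bilinear form. Pairing any `f` vanishing on `B` with
the potential `h_{x,B}`, which is harmonic off `{x} ∪ B`, gives `f(x) Cap(x,B)`. For `f = h_{A,B}`,
Cauchy–Schwarz then yields `(h_{A,B}(x) Cap(x,B))² ≤ D(h_{A,B}) Cap(x,B)`, so the claim holds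
with `C₀ = 1`. -/

theorem Relation.ReflTransGen.exists_ne_of_ne {α β : Type*} {r : α → α → Prop} {g : α → β}
    {x y : α} (hxy : Relation.ReflTransGen r x y) (hne : g x ≠ g y) :
    ∃ a b, r a b ∧ g a ≠ g b := by
  by_contra! hconst
  have : Relation.ReflTransGen Eq (g x) (g y) := hxy.lift g hconst
  exact hne (by rwa [Relation.reflTransGen_eq_self] at this)

section DirichletForm

variable {V : Type*} [Fintype V] (R : V → V → ℝ) (π : V → ℝ)

def dirichletBilin (f g : V → ℝ) : ℝ :=
  ∑ x, π x * (f x * (-(gen R g x)))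

theorem dirichlet_eq_dirichletBilin (f : V → ℝ) : dirichlet R π f = dirichletBilin R π f f :=
  rfl

variable {R π}

theorem dirichletBilin_eq_sum_edges (hrev : Reversible R π) (f g : V → ℝ) :
    dirichletBilin R π f g =
      (1 / 2) * ∑ e : V × V, π e.1 * R e.1 e.2 * ((f e.1 - f e.2) * (g e.1 - g e.2)) := by
  have hfwd : dirichletBilin R π f g = ∑ x, ∑ y, π x * R x y * (f x * (g x - g y)) := by
    refine Finset.sum_congr rfl fun x _ => ?_
    simp only [gen, Finset.mul_sum, ← Finset.sum_neg_distrib]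
    exact Finset.sum_congr rfl fun y _ => by ring
  -- detailed balance lets us swap the roles of the two endpoints of each edge
  have hbwd : dirichletBilin R π f g = ∑ x, ∑ y, π x * R x y * (f y * (g y - g x)) := by
    rw [hfwd, Finset.sum_comm]
    exact Finset.sum_congr rfl fun x _ => Finset.sum_congr rfl fun y _ => by rw [hrev x y]
  rw [Fintype.sum_prod_type]
  simp only [mul_sub, sub_mul, Finset.sum_sub_distrib] at hfwd hbwd ⊢
  linarith

variable (hR : ∀ x y, 0 ≤ R x y) (hπ : ∀ x, 0 < π x) (hrev : Reversible R π)
include hR hπ hrev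

theorem dirichletBilin_sq_le (f g : V → ℝ) :
    dirichletBilin R π f g ^ 2 ≤ dirichletBilin R π f f * dirichletBilin R π g g := by
  have hw : ∀ e : V × V, 0 ≤ π e.1 * R e.1 e.2 := fun e => mul_nonneg (hπ e.1).le (hR e.1 e.2)
  have hCS := Finset.sum_sq_le_sum_mul_sum_of_sq_le_mul Finset.univ
    (r := fun e : V × V => π e.1 * R e.1 e.2 * ((f e.1 - f e.2) * (g e.1 - g e.2)))
    (f := fun e => π e.1 * R e.1 e.2 * ((f e.1 - f e.2) * (f e.1 - f e.2)))
    (g := fun e => π e.1 * R e.1 e.2 * ((g e.1 - g e.2) * (g e.1 - g e.2)))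
    (fun e _ => mul_nonneg (hw e) (mul_self_nonneg _))
    (fun e _ => mul_nonneg (hw e) (mul_self_nonneg _)) (fun e _ => (by ring : _ = _).le)
  simp only [dirichletBilin_eq_sum_edges hrev]
  nlinarith

theorem dirichletBilin_self_pos (hirr : Irred R) {g : V → ℝ} {x y : V} (hne : g x ≠ g y) :
    0 < dirichletBilin R π g g := by
  obtain ⟨a, b, hab, hgab⟩ := (hirr x y).exists_ne_of_ne hne
  rw [dirichletBilin_eq_sum_edges hrev]
  refine mul_pos one_half_pos (Finset.sum_pos' (fun e _ => ?_) ⟨(a, b), Finset.mem_univ _, ?_⟩)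
  · exact mul_nonneg (mul_nonneg (hπ e.1).le (hR e.1 e.2)) (mul_self_nonneg _)
  · exact mul_pos (mul_pos (hπ a) hab) (mul_self_pos.mpr (sub_ne_zero.mpr hgab))

omit hR hπ hrev

theorem dirichletBilin_eqPotential_singleton [DecidableEq V] {B : Finset V} {x : V}
    {h : V → ℝ} (hpot : IsEqPotential R {x} B h) {f : V → ℝ} (hfB : ∀ y ∈ B, f y = 0) :
    dirichletBilin R π f h = f x * capFor R π {x} h := by
  rw [capFor, Finset.sum_singleton, dirichletBilin, Finset.sum_eq_single x _ (by simp)]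
  · ring
  intro y _ hyx
  by_cases hyB : y ∈ B
  · rw [hfB y hyB, zero_mul, mul_zero]
  · rw [hpot.2.2 y (by simpa using hyx) hyB, neg_zero, mul_zero, mul_zero]

end DirichletForm

/-- there is a constant `C₀`, depending only on `V` (hence only on the
number of edges), such that for every reversible irreducible chain, all nonempty disjoint
`A, B` and all `x ∉ A ∪ B`, `h_{A,B}(x)² ≤ C₀ · Cap(A,B)/Cap({x},B)`, where the
capacities are expressed as Dirichlet forms of the equilibrium potentials. -/
theorem stmt1 (V : Type*) [Fintype V] [DecidableEq V] :
    ∃ C₀ : ℝ, 0 ≤ C₀ ∧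
      ∀ (R : V → V → ℝ) (π : V → ℝ),
        (∀ x y, 0 ≤ R x y) → (∀ x, 0 < π x) → Irred R →
        Stationary R π → Reversible R π →
        ∀ A B : Finset V, A.Nonempty → B.Nonempty → Disjoint A B →
        ∀ hAB : V → ℝ, IsEqPotential R A B hAB →
        ∀ x : V, x ∉ A → x ∉ B →
        ∀ hxB : V → ℝ, IsEqPotential R {x} B hxB →
          (hAB x) ^ 2 ≤ C₀ * dirichlet R π hAB / dirichlet R π hxB := by
  refine ⟨1, zero_le_one, ?_⟩
  intro R π hR hπ hirr _ hrev A B _ hB _ hAB hABpot x _ _ hxB hxBpot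
  set c := capFor R π {x} hxB
  have hc : dirichlet R π hxB = c := by
    rw [dirichlet_eq_dirichletBilin, dirichletBilin_eqPotential_singleton hxBpot hxBpot.2.1,
      hxBpot.1 x (Finset.mem_singleton_self x), one_mul]
  have hcross : dirichletBilin R π hAB hxB = hAB x * c :=
    dirichletBilin_eqPotential_singleton hxBpot hABpot.2.1
  obtain ⟨b, hb⟩ := hB
  have hcpos : 0 < c := by
    rw [← hc, dirichlet_eq_dirichletBilin]
    refine dirichletBilin_self_pos hR hπ hrev hirr (x := x) (y := b) ?_
    rw [hxBpot.1 x (Finset.mem_singleton_self x), hxBpot.2.1 b hb]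
    exact one_ne_zero
  have hCS := dirichletBilin_sq_le hR hπ hrev hAB hxB
  rw [hcross, ← dirichlet_eq_dirichletBilin, ← dirichlet_eq_dirichletBilin, hc] at hCS
  rw [hc, one_mul, le_div_iff₀ hcpos]
  nlinarith
end
end

section
/- Let X_t be an irreducible continuous-time Markov chain on a finite set V, and let X^W_t denote its trace on a nonempty subset W ⊂ V (the process obtained by deleting all excursions outside W), with generator L_W. Fix V_0 ⊂ W and g : V_0 → ℝ. Let f solve Lf = 0 on V∖V_0, f = g on V_0, and let f_W solve L_W f_W = 0 on W∖V_0, f_W = g on V_0. Then f_W(x) = f(x) for all x ∈ W, and (Lf)(x) = (L_W f_W)(x) for all x ∈ V_0. -/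
open Finset Filter Topology

noncomputable section

/-!
Let `H φ (z) = ∑_{y ∈ W} hm z y φ(y)` be the harmonic extension of `φ : W → ℝ` off `W`.
Splitting the jumps of `X` from `x ∈ W` into direct jumps inside `W` and jumps to `z ∉ W`
followed by the first entrance into `W` (distributed as `hm z ·`) gives `L_W φ = L (H φ)` on `W`.
Hence `H f_W` solves the same Dirichlet problem as `f`, and the maximum principle for the
irreducible chain makes that solution unique: `H f_W = f`, which yields both claims.
-/

section Generator

variable {V : Type*} [Fintype V] (R : V → V → ℝ)

lemma gen_sub (u v : V → ℝ) (x : V) : gen R (u - v) x = gen R u x - gen R v x := by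
  simp only [gen, Pi.sub_apply, ← sum_sub_distrib]
  exact sum_congr rfl fun y _ => by ring

lemma gen_const (c : ℝ) (x : V) : gen R (fun _ => c) x = 0 := by
  simp [gen]

lemma gen_sum_mul (W : Finset V) (h : V → V → ℝ) (c : V → ℝ) (x : V) :
    gen R (fun z => ∑ y ∈ W, h z y * c y) x = ∑ y ∈ W, c y * gen R (fun z => h z y) x := by
  simp only [gen, ← sum_sub_distrib, mul_sum]
  rw [sum_comm]
  exact sum_congr rfl fun y _ => sum_congr rfl fun z _ => by ring

end Generator

lemma Relation.ReflTransGen.exists_stop_of_invariant {α : Type*} {r : α → α → Prop}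
    {P S : α → Prop} (hstep : ∀ x y, P x → ¬ S x → r x y → P y) {a b : α}
    (h : Relation.ReflTransGen r a b) (ha : P a) (hb : S b) : ∃ c, S c ∧ P c := by
  induction h using Relation.ReflTransGen.head_induction_on with
  | refl => exact ⟨_, hb, ha⟩
  | @head x y hxy _ ih =>
    by_cases hS : S x
    · exact ⟨_, hS, ha⟩
    · exact ih (hstep _ _ ha hS hxy)

section MaximumPrinciple

variable {V : Type*} [Fintype V] {R : V → V → ℝ}

lemma eq_of_forall_le_of_gen_eq_zero (hR : ∀ x y, 0 ≤ R x y) {u : V → ℝ} {x y : V}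
    (hmax : ∀ z, u z ≤ u x) (hx : gen R u x = 0) (hxy : 0 < R x y) : u y = u x := by
  have hnonpos : ∀ z ∈ univ, R x z * (u z - u x) ≤ 0 := fun z _ =>
    mul_nonpos_of_nonneg_of_nonpos (hR x z) (sub_nonpos.mpr (hmax z))
  have hy := (sum_eq_zero_iff_of_nonpos hnonpos).mp hx y (mem_univ y)
  linarith [(mul_eq_zero.mp hy).resolve_left hxy.ne']

lemma exists_mem_forall_le_of_gen_eq_zero (hR : ∀ x y, 0 ≤ R x y) (hirr : Irred R)
    {B : Finset V} (hB : B.Nonempty) {u : V → ℝ} (hu : ∀ x ∉ B, gen R u x = 0) :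
    ∃ b ∈ B, ∀ x, u x ≤ u b := by
  obtain ⟨b, hb⟩ := hB
  obtain ⟨x₀, -, hx₀⟩ := exists_max_image univ u ⟨b, mem_univ b⟩
  have hmax : ∀ z, u z ≤ u x₀ := fun z => hx₀ z (mem_univ z)
  obtain ⟨c, hcB, hc⟩ := (hirr x₀ b).exists_stop_of_invariant (P := fun x => u x = u x₀)
    (S := (· ∈ B))
    (fun x y hx hxB hxy =>
      (eq_of_forall_le_of_gen_eq_zero hR (hx ▸ hmax) (hu x hxB) hxy).trans hx)
    rfl hb
  exact ⟨c, hcB, fun x => hc ▸ hmax x⟩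

theorem eq_of_eqOn_of_gen_eq_zero (hR : ∀ x y, 0 ≤ R x y) (hirr : Irred R)
    {B : Finset V} (hB : B.Nonempty) {u v : V → ℝ} (huv : ∀ x ∈ B, u x = v x)
    (hu : ∀ x ∉ B, gen R u x = 0) (hv : ∀ x ∉ B, gen R v x = 0) : u = v := by
  have hdiff : ∀ a b : V → ℝ, (∀ x ∉ B, gen R a x = 0) →
      (∀ x ∉ B, gen R b x = 0) → ∀ x ∉ B, gen R (a - b) x = 0 := fun a b ha hb x hx => by
    rw [gen_sub, ha x hx, hb x hx, sub_zero]
  obtain ⟨b₁, hb₁, h₁⟩ := exists_mem_forall_le_of_gen_eq_zero hR hirr hB (hdiff u v hu hv)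
  obtain ⟨b₂, hb₂, h₂⟩ := exists_mem_forall_le_of_gen_eq_zero hR hirr hB (hdiff v u hv hu)
  funext x
  have hle := h₁ x
  have hge := h₂ x
  simp only [Pi.sub_apply, huv b₁ hb₁, huv b₂ hb₂, sub_self] at hle hge
  linarith

end MaximumPrinciple

section HarmonicExtension

variable {V : Type*} {R : V → V → ℝ} {W : Finset V} {hm : V → V → ℝ}

/-- `harmonicExt W hm φ z = E_z[φ(X_{H_W})]` when `hm z y = P_z[X_{H_W} = y]`. -/
def harmonicExt (W : Finset V) (hm : V → V → ℝ) (φ : V → ℝ) (z : V) : ℝ :=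
  ∑ y ∈ W, hm z y * φ y

lemma harmonicExt_of_mem [DecidableEq V]
    (hm0 : ∀ x ∈ W, ∀ y, hm x y = if x = y then 1 else 0)
    (φ : V → ℝ) {x : V} (hx : x ∈ W) : harmonicExt W hm φ x = φ x := by
  simp [harmonicExt, hm0 x hx, hx]

lemma gen_harmonicExt_of_notMem [Fintype V]
    (hmh : ∀ x ∉ W, ∀ y, gen R (fun z => hm z y) x = 0)
    (φ : V → ℝ) {x : V} (hx : x ∉ W) : gen R (harmonicExt W hm φ) x = 0 := by
  unfold harmonicExt
  rw [gen_sum_mul]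
  exact sum_eq_zero fun y _ => by rw [hmh x hx y, mul_zero]

lemma harmonicExt_one [Fintype V] [DecidableEq V] (hR : ∀ x y, 0 ≤ R x y) (hirr : Irred R)
    (hW : W.Nonempty) (hm0 : ∀ x ∈ W, ∀ y, hm x y = if x = y then 1 else 0)
    (hmh : ∀ x ∉ W, ∀ y, gen R (fun z => hm z y) x = 0) :
    harmonicExt W hm (fun _ => 1) = fun _ => 1 :=
  eq_of_eqOn_of_gen_eq_zero hR hirr hW (fun _ hx => harmonicExt_of_mem hm0 _ hx)
    (fun _ hx => gen_harmonicExt_of_notMem hmh _ hx) (fun x _ => gen_const R 1 x)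

theorem genOn_eq_gen_harmonicExt [Fintype V] [DecidableEq V]
    (hm0 : ∀ x ∈ W, ∀ y, hm x y = if x = y then 1 else 0)
    (hsum : harmonicExt W hm (fun _ => 1) = fun _ => 1) {RW : V → V → ℝ}
    (hRW : ∀ x ∈ W, ∀ y ∈ W, x ≠ y → RW x y = R x y + ∑ z ∈ Wᶜ, R x z * hm z y)
    (hRWdiag : ∀ x, RW x x = 0) (φ : V → ℝ) {x : V} (hx : x ∈ W) :
    genOn W RW φ x = gen R (harmonicExt W hm φ) x := by
  set F := harmonicExt W hm φ
  have hF : ∀ y ∈ W, F y = φ y := fun y hy => harmonicExt_of_mem hm0 φ hy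
  have hRW' : ∀ y ∈ W, RW x y * (φ y - φ x)
      = R x y * (F y - F x) + ∑ z ∈ Wᶜ, R x z * (hm z y * (φ y - φ x)) := by
    intro y hy
    rw [hF y hy, hF x hx]
    by_cases hxy : x = y
    · simp [hxy, hRWdiag]
    · rw [hRW x hx y hy hxy, add_mul, sum_mul]
      exact congrArg _ (sum_congr rfl fun z _ => by ring)
  have hexit : ∀ z, ∑ y ∈ W, hm z y * (φ y - φ x) = F z - F x := by
    intro z
    have h1 := congrFun hsum z
    simp only [harmonicExt, mul_one] at h1
    rw [← hF x hx]
    simp only [F, harmonicExt, mul_sub, sum_sub_distrib, ← sum_mul, h1, one_mul]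
  calc genOn W RW φ x
      = ∑ y ∈ W, R x y * (F y - F x) + ∑ z ∈ Wᶜ, R x z * (F z - F x) := by
        rw [genOn, sum_congr rfl hRW', sum_add_distrib, sum_comm]
        simp only [← mul_sum, hexit]
    _ = gen R F x := sum_add_sum_compl W _

end HarmonicExtension

theorem stmt3_general {V : Type*} [Fintype V] [DecidableEq V]
    (R : V → V → ℝ) (hR : ∀ x y, 0 ≤ R x y)
    (hirr : Irred R)
    (W : Finset V)
    (V₀ : Finset V) (hV₀W : V₀ ⊆ W) (hV₀ne : V₀.Nonempty)
    (hm : V → V → ℝ)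
    (hm0 : ∀ x ∈ W, ∀ y, hm x y = if x = y then 1 else 0)
    (hmh : ∀ x, x ∉ W → ∀ y, gen R (fun z => hm z y) x = 0)
    (RW : V → V → ℝ)
    (hRW : ∀ x ∈ W, ∀ y ∈ W, x ≠ y → RW x y = R x y + ∑ z ∈ Wᶜ, R x z * hm z y)
    (hRWdiag : ∀ x, RW x x = 0)
    (g f fW : V → ℝ)
    (hf0 : ∀ x ∈ V₀, f x = g x)
    (hfh : ∀ x, x ∉ V₀ → gen R f x = 0)
    (hfW0 : ∀ x ∈ V₀, fW x = g x)
    (hfWh : ∀ x ∈ W, x ∉ V₀ → genOn W RW fW x = 0) :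
    (∀ x ∈ W, fW x = f x) ∧ ∀ x ∈ V₀, gen R f x = genOn W RW fW x := by
  have hsum := harmonicExt_one hR hirr (hV₀ne.mono hV₀W) hm0 hmh
  have htrace : ∀ x ∈ W, genOn W RW fW x = gen R (harmonicExt W hm fW) x :=
    fun _ hx => genOn_eq_gen_harmonicExt hm0 hsum hRW hRWdiag fW hx
  have hext : ∀ x ∈ W, harmonicExt W hm fW x = fW x := fun _ hx => harmonicExt_of_mem hm0 fW hx
  have hF : harmonicExt W hm fW = f := by
    refine eq_of_eqOn_of_gen_eq_zero hR hirr hV₀ne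
      (fun x hx => by rw [hext x (hV₀W hx), hfW0 x hx, hf0 x hx]) (fun x hx => ?_) hfh
    by_cases hxW : x ∈ W
    · rw [← htrace x hxW, hfWh x hxW hx]
    · exact gen_harmonicExt_of_notMem hmh fW hxW
  refine ⟨fun x hx => ?_, fun x hx => ?_⟩
  · rw [← hext x hx, hF]
  · rw [htrace x (hV₀W hx), hF]

/-- let `X^W` be the trace on `W` of an irreducible chain `X`, with jump
rates `R_W(x,y) = λ(x) P_x[H_y = H⁺_W] = R(x,y) + ∑_{z∉W} R(x,z) P_z[X_{H_W} = y]`,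
where the harmonic measure `hm z y = P_z[X_{H_W} = y]` solves the Dirichlet problem.
If `f` solves `Lf = 0` on `V∖V₀`, `f = g` on `V₀`, and `f_W` solves
`L_W f_W = 0` on `W∖V₀`, `f_W = g` on `V₀`, then `f_W = f` on `W` and
`(Lf)(x) = (L_W f_W)(x)` for all `x ∈ V₀`. -/
theorem stmt3 {V : Type*} [Fintype V] [DecidableEq V]
    (R : V → V → ℝ) (hR : ∀ x y, 0 ≤ R x y) (hRdiag : ∀ x, R x x = 0)
    (hirr : Irred R)
    (W : Finset V) (hWne : W.Nonempty)
    (V₀ : Finset V) (hV₀W : V₀ ⊆ W) (hV₀ne : V₀.Nonempty)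
    (hm : V → V → ℝ)
    (hm0 : ∀ x ∈ W, ∀ y, hm x y = if x = y then 1 else 0)
    (hmh : ∀ x, x ∉ W → ∀ y, gen R (fun z => hm z y) x = 0)
    (RW : V → V → ℝ)
    (hRW : ∀ x ∈ W, ∀ y ∈ W, x ≠ y → RW x y = R x y + ∑ z ∈ Wᶜ, R x z * hm z y)
    (hRWdiag : ∀ x, RW x x = 0)
    (g f fW : V → ℝ)
    (hf0 : ∀ x ∈ V₀, f x = g x)
    (hfh : ∀ x, x ∉ V₀ → gen R f x = 0)
    (hfW0 : ∀ x ∈ V₀, fW x = g x)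
    (hfWh : ∀ x ∈ W, x ∉ V₀ → genOn W RW fW x = 0) :
    (∀ x ∈ W, fW x = f x) ∧ ∀ x ∈ V₀, gen R f x = genOn W RW fW x :=
  stmt3_general R hR hirr W V₀ hV₀W hV₀ne hm hm0 hmh RW hRW hRWdiag g f fW hf0 hfh hfW0 hfWh
end
end

section
/- Let (X^{(n)}_t) be a sequence of irreducible reversible continuous-time Markov chains on a fixed finite set V with jump rates R_n(x,y) → ℝ_0(x,y) and stationary measures π_n. Suppose x and y lie in the same equivalence class of the limiting chain (i.e., there are directed paths from x to y and from y to x along edges with ℝ_0 > 0). Then the ratio π_n(x)/π_n(y) converges to a limit in (0,∞). Moreover, for any edge (x,y) within such an equivalence class, ℝ_0(x,y) > 0 if and only if ℝ_0(y,x) > 0. -/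
open Finset Filter Topology

noncomputable section

/-! The ratio `πₙ(x)/πₙ(y)` is a telescoping product of the edge ratios
`πₙ(b)/πₙ(c) = Rₙ(c,b)/Rₙ(b,c)` along an `ℝ₀`-path from `x` to `y`, so it converges; the
ratios along the two paths `x → y` and `y → x` multiply to `1`, so the limit is positive.
Passing to the limit in `Rₙ(y,x) = πₙ(x)/πₙ(y) · Rₙ(x,y)` then gives the symmetry of the
positive limiting rates. -/

section

variable {V : Type*}

theorem Reversible.rate_eq_div_mul {R : V → V → ℝ} {π : V → ℝ} (h : Reversible R π)
    {x y : V} (hy : π y ≠ 0) : R y x = π x / π y * R x y := by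
  rw [div_mul_eq_mul_div, eq_div_iff hy, h x y, mul_comm]

theorem mul_eq_one_of_tendsto_of_tendsto_inv {α : Type*} {l : Filter α} [l.NeBot] {u : α → ℝ}
    {a b : ℝ} (hu : ∀ᶠ n in l, u n ≠ 0) (ha : Tendsto u l (𝓝 a))
    (hb : Tendsto (fun n => (u n)⁻¹) l (𝓝 b)) : a * b = 1 := by
  refine tendsto_nhds_unique (ha.mul hb) (tendsto_const_nhds.congr' ?_)
  filter_upwards [hu] with n hn
  exact (mul_inv_cancel₀ hn).symm

variable {Rn : ℕ → V → V → ℝ} {R0 : V → V → ℝ} {πn : ℕ → V → ℝ}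

theorem tendsto_div_of_limit_rate_pos (hπ : ∀ n x, 0 < πn n x)
    (hrev : ∀ n, Reversible (Rn n) (πn n))
    (hlim : ∀ x y, Tendsto (fun n => Rn n x y) atTop (𝓝 (R0 x y))) {x y : V}
    (hxy : 0 < R0 x y) :
    Tendsto (fun n => πn n x / πn n y) atTop (𝓝 (R0 y x / R0 x y)) := by
  refine ((hlim y x).div (hlim x y) hxy.ne').congr' ?_
  filter_upwards [(hlim x y).eventually (eventually_gt_nhds hxy)] with n hn
  rw [Pi.div_apply, (hrev n).rate_eq_div_mul (hπ n y).ne', mul_div_cancel_right₀ _ hn.ne']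

theorem exists_tendsto_div_of_reflTransGen (hπ : ∀ n x, 0 < πn n x)
    (hrev : ∀ n, Reversible (Rn n) (πn n))
    (hlim : ∀ x y, Tendsto (fun n => Rn n x y) atTop (𝓝 (R0 x y))) {x y : V}
    (h : Relation.ReflTransGen (fun a b => 0 < R0 a b) x y) :
    ∃ L, Tendsto (fun n => πn n x / πn n y) atTop (𝓝 L) := by
  induction h with
  | refl =>
    exact ⟨1, tendsto_const_nhds.congr fun n => (div_self (hπ n x).ne').symm⟩
  | @tail b c _ hbc ih =>
    obtain ⟨L, hL⟩ := ih
    refine ⟨_, (hL.mul (tendsto_div_of_limit_rate_pos hπ hrev hlim hbc)).congr fun n => ?_⟩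
    exact div_mul_div_cancel₀ (hπ n b).ne'

theorem limit_rate_eq_mul_of_tendsto_div (hπ : ∀ n x, 0 < πn n x)
    (hrev : ∀ n, Reversible (Rn n) (πn n))
    (hlim : ∀ x y, Tendsto (fun n => Rn n x y) atTop (𝓝 (R0 x y))) {x y : V} {L : ℝ}
    (hL : Tendsto (fun n => πn n x / πn n y) atTop (𝓝 L)) : R0 y x = L * R0 x y :=
  tendsto_nhds_unique (hlim y x)
    ((hL.mul (hlim x y)).congr fun n => ((hrev n).rate_eq_div_mul (hπ n y).ne').symm)

end

theorem stmt8_general {V : Type*}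
    (Rn : ℕ → V → V → ℝ) (R0 : V → V → ℝ) (πn : ℕ → V → ℝ)
    (hπpos : ∀ n x, 0 < πn n x)
    (hrev : ∀ n, Reversible (Rn n) (πn n))
    (hlim : ∀ x y, Tendsto (fun n => Rn n x y) atTop (𝓝 (R0 x y)))
    (x y : V)
    (hxy : Relation.ReflTransGen (fun a b => 0 < R0 a b) x y)
    (hyx : Relation.ReflTransGen (fun a b => 0 < R0 a b) y x) :
    (∃ a : ℝ, 0 < a ∧ Tendsto (fun n => πn n x / πn n y) atTop (𝓝 a)) ∧
    (0 < R0 x y ↔ 0 < R0 y x) := by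
  obtain ⟨L, hL⟩ := exists_tendsto_div_of_reflTransGen hπpos hrev hlim hxy
  obtain ⟨L', hL'⟩ := exists_tendsto_div_of_reflTransGen hπpos hrev hlim hyx
  have hratio : ∀ n, 0 < πn n x / πn n y := fun n => div_pos (hπpos n x) (hπpos n y)
  have hLL' : L * L' = 1 :=
    mul_eq_one_of_tendsto_of_tendsto_inv (.of_forall fun n => (hratio n).ne') hL
      (hL'.congr fun n => (inv_div _ _).symm)
  have hL0 : 0 ≤ L := ge_of_tendsto' hL fun n => (hratio n).le
  have hLpos : 0 < L := hL0.lt_of_ne (left_ne_zero_of_mul_eq_one hLL').symm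
  refine ⟨⟨L, hLpos, hL⟩, ?_⟩
  rw [limit_rate_eq_mul_of_tendsto_div hπpos hrev hlim hL, mul_pos_iff_of_pos_left hLpos]

/-- for reversible chains with rates `Rn → R0`, if `x` and `y` lie in the
same equivalence class of the limiting chain (directed paths in both directions along
edges with positive limiting rate), then `πn(x)/πn(y)` converges to a limit in `(0,∞)`,
and `R0(x,y) > 0 ↔ R0(y,x) > 0`. -/
theorem stmt8 {V : Type*} [Fintype V]
    (Rn : ℕ → V → V → ℝ) (R0 : V → V → ℝ) (πn : ℕ → V → ℝ)
    (hRnn : ∀ n x y, 0 ≤ Rn n x y)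
    (hirr : ∀ n, Irred (Rn n))
    (hπpos : ∀ n x, 0 < πn n x)
    (hrev : ∀ n, Reversible (Rn n) (πn n))
    (hlim : ∀ x y, Tendsto (fun n => Rn n x y) atTop (𝓝 (R0 x y)))
    (x y : V)
    (hxy : Relation.ReflTransGen (fun a b => 0 < R0 a b) x y)
    (hyx : Relation.ReflTransGen (fun a b => 0 < R0 a b) y x) :
    (∃ a : ℝ, 0 < a ∧ Tendsto (fun n => πn n x / πn n y) atTop (𝓝 a)) ∧
    (0 < R0 x y ↔ 0 < R0 y x) :=
  stmt8_general Rn R0 πn hπpos hrev hlim x y hxy hyx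
end
end

section
/- Let (X^{(n)}_t) be a sequence of irreducible reversible Markov chains on a finite set V with rates R_n → ℝ_0 and stationary measures π_n. Let C be an equivalence class of the limiting chain (with respect to the relation generated by positive ℝ_0-rates in both directions), and let L^{(0)}_{T} be the generator of the limiting chain restricted to C (all jumps out of C set to zero), assumed irreducible on C, with stationary distribution ν. Then for all x ∈ C, lim_n π_n(x)/π_n(C) = ν(x), and ν is reversible for L^{(0)}_T. -/
open Finset Filter Topology

noncomputable section

/-!
Dividing `πₙ` by the constant `πₙ(C)` preserves detailed balance, so the limits `a(x)` of the
ratios `πₙ(x)/πₙ(C)` satisfy detailed balance for `ℝ₀` on `C`. Summing detailed balance over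
`C` shows that `a` is stationary for the restricted chain, and it is a probability on `C` as a
limit of probabilities. Uniqueness of the stationary distribution gives `a = ν` on `C`.
-/

section

variable {V : Type*}

theorem Reversible.div_const {R : V → V → ℝ} {π : V → ℝ} (h : Reversible R π) (c : ℝ) :
    Reversible R (fun x => π x / c) := fun x y => by
  simp only [div_mul_eq_mul_div, h x y]

theorem reversibleOn_of_tendsto {ι : Type*} {l : Filter ι} [l.NeBot]
    {R : ι → V → V → ℝ} {R₀ : V → V → ℝ} {π : ι → V → ℝ} {m : V → ℝ} {C : Finset V}
    (hrev : ∀ i, Reversible (R i) (π i))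
    (hR : ∀ x y, Tendsto (fun i => R i x y) l (𝓝 (R₀ x y)))
    (hπ : ∀ x ∈ C, Tendsto (fun i => π i x) l (𝓝 (m x))) :
    ∀ x ∈ C, ∀ y ∈ C, m x * R₀ x y = m y * R₀ y x := fun x hx y hy =>
  tendsto_nhds_unique (((hπ x hx).mul (hR x y)).congr fun i => hrev i x y)
    ((hπ y hy).mul (hR y x))

theorem sum_mul_eq_mul_sum_of_reversibleOn {R : V → V → ℝ} {m : V → ℝ} {C : Finset V}
    (h : ∀ x ∈ C, ∀ y ∈ C, m x * R x y = m y * R y x) :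
    ∀ y ∈ C, ∑ x ∈ C, m x * R x y = m y * ∑ z ∈ C, R y z := fun y hy => by
  rw [mul_sum]
  exact sum_congr rfl fun x hx => h x hx y hy

theorem sum_div_sum_self {π : V → ℝ} {C : Finset V} (h : ∑ z ∈ C, π z ≠ 0) :
    ∑ x ∈ C, π x / ∑ z ∈ C, π z = 1 := by
  rw [← sum_div, div_self h]

theorem sum_eq_of_tendsto {ι : Type*} {l : Filter ι} [l.NeBot] {p : ι → V → ℝ} {m : V → ℝ}
    {C : Finset V} {s : ℝ} (hp : ∀ i, ∑ x ∈ C, p i x = s)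
    (h : ∀ x ∈ C, Tendsto (fun i => p i x) l (𝓝 (m x))) :
    ∑ x ∈ C, m x = s :=
  tendsto_nhds_unique (tendsto_finsetSum C h) (by simp only [hp, tendsto_const_nhds])

end

theorem stmt9_general {V : Type*} [Fintype V]
    (Rn : ℕ → V → V → ℝ) (R0 : V → V → ℝ) (πn : ℕ → V → ℝ)
    (hπpos : ∀ n x, 0 < πn n x)
    (hrev : ∀ n, Reversible (Rn n) (πn n))
    (hlim : ∀ x y, Tendsto (fun n => Rn n x y) atTop (𝓝 (R0 x y)))
    (C : Finset V) (hCne : C.Nonempty)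
    -- `ν` is the (unique) stationary distribution of the restricted chain on `C`:
    (ν : V → ℝ)
    (hνuniq : ∀ m : V → ℝ, (∀ x, 0 ≤ m x) → (∑ x ∈ C, m x = 1) →
      (∀ y ∈ C, ∑ x ∈ C, m x * R0 x y = m y * ∑ z ∈ C, R0 y z) →
      ∀ x ∈ C, m x = ν x)
    -- the ratios converge:
    (hconv : ∀ x ∈ C, ∃ a : ℝ,
      Tendsto (fun n => πn n x / ∑ z ∈ C, πn n z) atTop (𝓝 a)) :
    (∀ x ∈ C, Tendsto (fun n => πn n x / ∑ z ∈ C, πn n z) atTop (𝓝 (ν x))) ∧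
    (∀ x ∈ C, ∀ y ∈ C, ν x * R0 x y = ν y * R0 y x) := by
  classical
  choose! a ha using hconv
  -- `choose!` leaves `a` arbitrary off `C`, while `hνuniq` wants a nonnegative function on `V`.
  set m : V → ℝ := C.piecewise a 0
  have hm : ∀ x ∈ C, Tendsto (fun n => πn n x / ∑ z ∈ C, πn n z) atTop (𝓝 (m x)) :=
    fun x hx => by simpa only [m, piecewise_eq_of_mem _ _ _ hx] using ha x hx
  have hSpos : ∀ n, 0 < ∑ z ∈ C, πn n z := fun n => sum_pos (fun z _ => hπpos n z) hCne
  have hm_nonneg : ∀ x, 0 ≤ m x := fun x => by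
    by_cases hx : x ∈ C
    · exact ge_of_tendsto' (hm x hx) fun n => div_nonneg (hπpos n x).le (hSpos n).le
    · simp only [m, piecewise_eq_of_notMem _ _ _ hx, Pi.zero_apply, le_refl]
  have hm_sum : ∑ x ∈ C, m x = 1 :=
    sum_eq_of_tendsto (fun n => sum_div_sum_self (hSpos n).ne') hm
  have hm_rev := reversibleOn_of_tendsto (fun n => (hrev n).div_const _) hlim hm
  have hmν := hνuniq m hm_nonneg hm_sum (sum_mul_eq_mul_sum_of_reversibleOn hm_rev)
  refine ⟨fun x hx => hmν x hx ▸ hm x hx, fun x hx y hy => ?_⟩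
  rw [← hmν x hx, ← hmν y hy]
  exact hm_rev x hx y hy

/-- reversible chains with rates `Rn → R0`; `C` an equivalence class of the
limiting chain (mutual reachability within `C` along positive limiting rates); the
restricted limiting chain on `C` is irreducible with stationary distribution `ν`.
If the ratios `πn(x)/πn(C)` converge for all `x ∈ C`, then they converge to `ν(x)`,
and `ν` is reversible for the restricted generator. -/
theorem stmt9 {V : Type*} [Fintype V] [DecidableEq V]
    (Rn : ℕ → V → V → ℝ) (R0 : V → V → ℝ) (πn : ℕ → V → ℝ)
    (hRnn : ∀ n x y, 0 ≤ Rn n x y)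
    (hirr : ∀ n, Irred (Rn n))
    (hπpos : ∀ n x, 0 < πn n x)
    (hrev : ∀ n, Reversible (Rn n) (πn n))
    (hlim : ∀ x y, Tendsto (fun n => Rn n x y) atTop (𝓝 (R0 x y)))
    (C : Finset V) (hCne : C.Nonempty)
    (hclass : ∀ x ∈ C, ∀ y ∈ C,
      Relation.ReflTransGen (fun a b => a ∈ C ∧ b ∈ C ∧ 0 < R0 a b) x y)
    -- `ν` is the (unique) stationary distribution of the restricted chain on `C`:
    (ν : V → ℝ)
    (hν0 : ∀ x, x ∉ C → ν x = 0) (hνnn : ∀ x, 0 ≤ ν x) (hν1 : ∑ x ∈ C, ν x = 1)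
    (hνstat : ∀ y ∈ C, ∑ x ∈ C, ν x * R0 x y = ν y * ∑ z ∈ C, R0 y z)
    (hνuniq : ∀ m : V → ℝ, (∀ x, 0 ≤ m x) → (∑ x ∈ C, m x = 1) →
      (∀ y ∈ C, ∑ x ∈ C, m x * R0 x y = m y * ∑ z ∈ C, R0 y z) →
      ∀ x ∈ C, m x = ν x)
    -- the ratios converge:
    (hconv : ∀ x ∈ C, ∃ a : ℝ,
      Tendsto (fun n => πn n x / ∑ z ∈ C, πn n z) atTop (𝓝 a)) :
    (∀ x ∈ C, Tendsto (fun n => πn n x / ∑ z ∈ C, πn n z) atTop (𝓝 (ν x))) ∧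
    (∀ x ∈ C, ∀ y ∈ C, ν x * R0 x y = ν y * R0 y x) :=
  stmt9_general Rn R0 πn hπpos hrev hlim C hCne ν hνuniq hconv
end
end

section
/- Let (X^{(n)}_t) be a sequence of irreducible reversible Markov chains on a finite set V with rates R_n(x,y) → ℝ_0(x,y) and stationary measures π_n. Let x ∈ V be a transient point for the limiting chain 𝕏_t (with rates ℝ_0), and let V_j be a closed irreducible class of 𝕏_t such that the absorption probability a^{(0)}(x,j) = lim_{t→∞} Q_x[𝕏_t ∈ V_j] is positive. Then π_n(x)/π_n(V_j) → 0 as n → ∞. -/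
open Finset Filter Topology

noncomputable section

/-!
By detailed balance, `π(a)/π(b) = R(b,a)/R(a,b)` along every edge, so along the path
`x = γ₀, …, γ_ℓ` the ratio `πₙ(x)/πₙ(γ_ℓ)` is a product of rate ratios, each converging
since the forward limiting rates are positive. The last factor tends to
`ℝ₀(γ_ℓ, γ_{ℓ-1}) / ℝ₀(γ_{ℓ-1}, γ_ℓ) = 0`, because `V_j` is closed and `γ_{ℓ-1} ∈ Δ`
lies outside it; finally `πₙ(V_j) ≥ πₙ(γ_ℓ)`.
-/

namespace Reversible

variable {V : Type*} {R : V → V → ℝ} {π : V → ℝ}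

theorem div_eq (h : Reversible R π) {a b : V} (hb : π b ≠ 0) (hab : R a b ≠ 0) :
    π a / π b = R b a / R a b := by
  rw [div_eq_div_iff hb hab, h a b, mul_comm]

end Reversible

section Limits

variable {ι V : Type*} {l : Filter ι} {R : ι → V → V → ℝ} {R0 : V → V → ℝ}
  {π : ι → V → ℝ}

theorem tendsto_div_of_reversible (hrev : ∀ n, Reversible (R n) (π n))
    (hπ : ∀ n z, π n z ≠ 0) (hlim : ∀ a b, Tendsto (fun n => R n a b) l (𝓝 (R0 a b)))
    {a b : V} (hab : R0 a b ≠ 0) :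
    Tendsto (fun n => π n a / π n b) l (𝓝 (R0 b a / R0 a b)) := by
  have hRab : ∀ᶠ n in l, R n a b ≠ 0 := (hlim a b).eventually_ne hab
  refine ((hlim b a).div (hlim a b) hab).congr' ?_
  filter_upwards [hRab] with n hn
  exact ((hrev n).div_eq (hπ n b) hn).symm

theorem tendsto_div_of_path (hrev : ∀ n, Reversible (R n) (π n))
    (hπ : ∀ n z, π n z ≠ 0) (hlim : ∀ a b, Tendsto (fun n => R n a b) l (𝓝 (R0 a b)))
    (γ : ℕ → V) (m : ℕ) (hγ : ∀ i < m, R0 (γ i) (γ (i + 1)) ≠ 0) :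
    Tendsto (fun n => π n (γ 0) / π n (γ m)) l
      (𝓝 (∏ i ∈ range m, R0 (γ (i + 1)) (γ i) / R0 (γ i) (γ (i + 1)))) := by
  induction m with
  | zero => simpa [div_self (hπ _ _)] using tendsto_const_nhds
  | succ k ih =>
    have hfirst := ih fun i hi => hγ i (by omega)
    have hlast := tendsto_div_of_reversible hrev hπ hlim (hγ k k.lt_succ_self)
    rw [prod_range_succ]
    refine (hfirst.mul hlast).congr fun n => ?_
    exact div_mul_div_cancel₀ (hπ n (γ k))

end Limits

theorem stmt10_general {V : Type*} [Fintype V] [DecidableEq V]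
    (Rn : ℕ → V → V → ℝ) (R0 : V → V → ℝ) (πn : ℕ → V → ℝ)
    (hπpos : ∀ n x, 0 < πn n x)
    (hrev : ∀ n, Reversible (Rn n) (πn n))
    (hlim : ∀ x y, Tendsto (fun n => Rn n x y) atTop (𝓝 (R0 x y)))
    (Vj : Finset V)
    (hclosed : ∀ a ∈ Vj, ∀ b, b ∉ Vj → R0 a b = 0)
    (Δ : Finset V) (hΔVj : Disjoint Δ Vj)
    (x : V) (hxΔ : x ∈ Δ)
    -- positivity of the absorption probability `a⁰(x,j)`, witnessed by a path:
    (γ : ℕ → V) (ℓ : ℕ) (hγ0 : γ 0 = x)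
    (hγrate : ∀ i < ℓ, 0 < R0 (γ i) (γ (i + 1)))
    (hγΔ : ∀ i < ℓ, γ i ∈ Δ)
    (hγend : γ ℓ ∈ Vj) :
    Tendsto (fun n => πn n x / ∑ z ∈ Vj, πn n z) atTop (𝓝 0) := by
  have hℓ : ℓ ≠ 0 := by
    rintro rfl
    exact disjoint_left.1 hΔVj hxΔ (hγ0 ▸ hγend)
  obtain ⟨k, rfl⟩ := Nat.exists_eq_succ_of_ne_zero hℓ
  have hback : R0 (γ (k + 1)) (γ k) = 0 :=
    hclosed _ hγend _ (disjoint_left.1 hΔVj (hγΔ k k.lt_succ_self))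
  have hpath := tendsto_div_of_path hrev (fun n z => (hπpos n z).ne') hlim γ (k + 1)
    fun i hi => (hγrate i hi).ne'
  rw [prod_range_succ, hback, zero_div, mul_zero, hγ0] at hpath
  refine squeeze_zero (fun n => ?_) (fun n => ?_) hpath
  · exact div_nonneg (hπpos n x).le (sum_nonneg fun z _ => (hπpos n z).le)
  · exact div_le_div_of_nonneg_left (hπpos n x).le (hπpos n _)
      (single_le_sum (fun z _ => (hπpos n z).le) hγend)

/-- reversible chains with rates `Rn → R0`; `Vj` a closed irreducible class
of the limiting chain; `x` a transient point of the limiting chain which is absorbed in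
`Vj` with positive probability, i.e. there is a path `x = γ₀, …, γ_ℓ` with positive
limiting rates, transient intermediate points, ending in `Vj`.  Then
`πn(x)/πn(Vj) → 0`. -/
theorem stmt10 {V : Type*} [Fintype V] [DecidableEq V]
    (Rn : ℕ → V → V → ℝ) (R0 : V → V → ℝ) (πn : ℕ → V → ℝ)
    (hRnn : ∀ n x y, 0 ≤ Rn n x y)
    (hirr : ∀ n, Irred (Rn n))
    (hπpos : ∀ n x, 0 < πn n x)
    (hrev : ∀ n, Reversible (Rn n) (πn n))
    (hlim : ∀ x y, Tendsto (fun n => Rn n x y) atTop (𝓝 (R0 x y)))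
    (Vj : Finset V) (hVjne : Vj.Nonempty)
    (hclosed : ∀ a ∈ Vj, ∀ b, b ∉ Vj → R0 a b = 0)
    (hclassirr : ∀ a ∈ Vj, ∀ b ∈ Vj,
      Relation.ReflTransGen (fun a b => a ∈ Vj ∧ b ∈ Vj ∧ 0 < R0 a b) a b)
    (Δ : Finset V) (hΔVj : Disjoint Δ Vj)
    -- `Δ` consists of transient states of the limiting chain:
    (hΔtrans : ∀ a ∈ Δ, ∃ b, Relation.ReflTransGen (fun u v => 0 < R0 u v) a b ∧
      ¬ Relation.ReflTransGen (fun u v => 0 < R0 u v) b a)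
    (x : V) (hxΔ : x ∈ Δ)
    -- positivity of the absorption probability `a⁰(x,j)`, witnessed by a path:
    (γ : ℕ → V) (ℓ : ℕ) (hγ0 : γ 0 = x)
    (hγrate : ∀ i < ℓ, 0 < R0 (γ i) (γ (i + 1)))
    (hγΔ : ∀ i < ℓ, γ i ∈ Δ)
    (hγend : γ ℓ ∈ Vj) :
    Tendsto (fun n => πn n x / ∑ z ∈ Vj, πn n z) atTop (𝓝 0) :=
  stmt10_general Rn R0 πn hπpos hrev hlim Vj hclosed Δ hΔVj x hxΔ γ ℓ hγ0 hγrate hγΔ hγend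
end
end

section
/- Let X_t be a finite-state irreducible continuous-time Markov chain on V, let 𝕏_t be the Markov chain with jump rates ℝ_0(x,y) = lim_n R_n(x,y), and suppose (X^{(n)}_t, 𝕏_t) are coupled so that they jump together as much as possible. Let V_1,…,V_𝔫 be the closed irreducible classes of 𝕏_t and ω(x,y) = lim_{t→∞} Q_x[𝕏_t = y]. Then for every ε > 0 there exists T_ε < ∞ such that limsup_n |P^n_x[X_{T_ε} = y] − ω(x,y)| ≤ ε for all x, y ∈ V. Moreover ω(x,y) = 0 if y is transient for 𝕏, and ω(x,y) = a^{(0)}(x,j) π^♯_j(y) if y ∈ V_j, where a^{(0)}(x,j) is the absorption probability of 𝕏 at V_j starting from x and π^♯_j is the stationary state of 𝕏 restricted to V_j. -/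
/-!
For a fixed time `T` the transition probabilities depend continuously on the rates, through the
matrix exponential; choosing `T` at which the limiting chain is already `ε`-close to `ω` gives
the first claim. Each row `ω(x, ·)` is a nonnegative measure invariant under the semigroup of the
limiting chain, hence stationary. Balancing the flow across a set of states then shows that it
vanishes at transient states and is stationary for the chain restricted to each closed class
`V_j`, where the stationary state is unique up to the total mass `a⁰(x, j)`.
-/

open Finset Filter Topology

noncomputable section

/-- The generator matrix of a chain with jump rates `R` (zero diagonal convention). -/
def genMatrix {V : Type*} [Fintype V] [DecidableEq V] (R : V → V → ℝ) : Matrix V V ℝ :=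
  fun x y => if x = y then -(∑ z, R x z) else R x y

/-- Transition probability `p_t(x,y) = (e^{tL})(x,y)`. -/
def transProb {V : Type*} [Fintype V] [DecidableEq V] (R : V → V → ℝ) (t : ℝ)
    (x y : V) : ℝ :=
  (NormedSpace.exp (t • genMatrix R)) x y

open NormedSpace

section TransitionSemigroup

variable {V : Type*} [Fintype V] [DecidableEq V]

section NormedMatrix

attribute [local instance] Matrix.linftyOpNormedRing Matrix.linftyOpNormedAlgebra

theorem Matrix.exp_apply_nonneg_of_nonneg {A : Matrix V V ℝ} (hA : ∀ i j, 0 ≤ A i j)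
    (i j : V) : 0 ≤ exp A i j := by
  have hpow : ∀ n : ℕ, ∀ i j, 0 ≤ (A ^ n) i j := by
    intro n
    induction n with
    | zero => intro i j; rw [pow_zero, Matrix.one_apply]; split_ifs <;> norm_num
    | succ n ih =>
      intro i j
      rw [pow_succ, Matrix.mul_apply]
      exact sum_nonneg fun k _ => mul_nonneg (ih i k) (hA k j)
  have hsum := Pi.hasSum.mp (Pi.hasSum.mp (exp_series_hasSum_exp' (𝕂 := ℝ) A) i) j
  exact hsum.nonneg fun n => mul_nonneg (by positivity) (hpow n i j)

theorem hasDerivAt_transProb_zero (R : V → V → ℝ) (x y : V) :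
    HasDerivAt (fun t => transProb R t x y) (genMatrix R x y) 0 := by
  have h := hasDerivAt_exp_smul_const (𝕂 := ℝ) (genMatrix R) 0
  rw [zero_smul, exp_zero, one_mul] at h
  exact (LinearMap.toContinuousLinearMap (Matrix.entryLinearMap ℝ ℝ x y)).hasFDerivAt
    |>.comp_hasDerivAt 0 h

theorem tendsto_transProb_of_tendsto_rates {ι : Type*} {l : Filter ι} {R : ι → V → V → ℝ}
    {R₀ : V → V → ℝ} (hR : ∀ x y, Tendsto (fun n => R n x y) l (𝓝 (R₀ x y))) (t : ℝ)
    (x y : V) : Tendsto (fun n => transProb (R n) t x y) l (𝓝 (transProb R₀ t x y)) := by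
  have hgen : Tendsto (fun n => genMatrix (R n)) l (𝓝 (genMatrix R₀)) := by
    refine tendsto_pi_nhds.mpr fun p => tendsto_pi_nhds.mpr fun q => ?_
    by_cases h : p = q
    · simpa only [genMatrix, if_pos h] using (tendsto_finsetSum _ fun z _ => hR p z).neg
    · simpa only [genMatrix, if_neg h] using hR p q
  exact ((hgen.const_smul t).exp).apply_nhds x |>.apply_nhds y

end NormedMatrix

/-- Shifting by a multiple of the identity makes `A` entrywise nonnegative, and only rescales
`exp A` by a positive factor. -/
theorem Matrix.exp_apply_nonneg {A : Matrix V V ℝ} (hA : ∀ i j, i ≠ j → 0 ≤ A i j)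
    (i j : V) : 0 ≤ exp A i j := by
  set c := ∑ k, |A k k|
  have hshift : ∀ i j, 0 ≤ (A + algebraMap ℝ _ c) i j := by
    intro i j
    rw [Matrix.add_apply, Matrix.algebraMap_matrix_apply]
    split_ifs with h
    · subst h
      have : |A i i| ≤ c := single_le_sum (f := fun k => |A k k|) (fun _ _ => abs_nonneg _)
        (mem_univ i)
      simp only [Algebra.algebraMap_self, RingHom.id_apply]
      linarith [neg_abs_le (A i i)]
    · simpa using hA i j h
  have hexp_scalar : exp (algebraMap ℝ (Matrix V V ℝ) (-c)) = Real.exp (-c) • 1 := by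
    rw [Matrix.algebraMap_eq_diagonal, Matrix.exp_diagonal]
    ext i j
    simp [Matrix.diagonal_apply, Real.exp_eq_exp_ℝ, Matrix.one_apply]
  have hexp : exp A = Real.exp (-c) • exp (A + algebraMap ℝ _ c) := by
    have hsplit : A = (A + algebraMap ℝ _ c) + algebraMap ℝ _ (-c) := by
      rw [map_neg, add_neg_cancel_right]
    conv_lhs => rw [hsplit]
    rw [Matrix.exp_add_of_commute _ _ (Algebra.commute_algebraMap_right _ _), hexp_scalar,
      mul_smul_comm, mul_one]
  rw [hexp, Matrix.smul_apply, smul_eq_mul]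
  exact mul_nonneg (Real.exp_pos _).le (Matrix.exp_apply_nonneg_of_nonneg hshift i j)

theorem transProb_nonneg {R : V → V → ℝ} (hR : ∀ x y, 0 ≤ R x y) {t : ℝ} (ht : 0 ≤ t)
    (x y : V) : 0 ≤ transProb R t x y :=
  Matrix.exp_apply_nonneg (fun i j hij => by
    simpa [genMatrix, hij] using mul_nonneg ht (hR i j)) x y

theorem transProb_add (R : V → V → ℝ) (t s : ℝ) (x y : V) :
    transProb R (t + s) x y = ∑ z, transProb R t x z * transProb R s z y := by
  rw [transProb, add_smul,
    Matrix.exp_add_of_commute _ _ ((Commute.refl _).smul_left t |>.smul_right s),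
    Matrix.mul_apply]
  rfl

end TransitionSemigroup

def StationaryOn {V : Type*} (W : Finset V) (R : V → V → ℝ) (μ : V → ℝ) : Prop :=
  ∀ y ∈ W, ∑ x ∈ W, μ x * R x y = μ y * ∑ z ∈ W, R y z

def IrredOn {V : Type*} (W : Finset V) (R : V → V → ℝ) : Prop :=
  ∀ a ∈ W, ∀ b ∈ W, Relation.ReflTransGen (fun u v => u ∈ W ∧ v ∈ W ∧ 0 < R u v) a b

section StationaryMeasuresOn

variable {V : Type*} {R : V → V → ℝ} {μ : V → ℝ}

theorem StationaryOn.pos_of_rate_pos {W : Finset V} (h : StationaryOn W R μ)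
    (hR : ∀ x y, 0 ≤ R x y) (hμ : ∀ x ∈ W, 0 ≤ μ x) {u v : V} (hu : u ∈ W) (hv : v ∈ W)
    (huv : 0 < R u v) (hμu : 0 < μ u) : 0 < μ v := by
  have hle : μ u * R u v ≤ μ v * ∑ z ∈ W, R v z :=
    h v hv ▸ single_le_sum (fun x hx => mul_nonneg (hμ x hx) (hR x v)) hu
  exact pos_of_mul_pos_left ((mul_pos hμu huv).trans_le hle) (sum_nonneg fun z _ => hR v z)

theorem StationaryOn.pos_of_reflTransGen {W : Finset V} (h : StationaryOn W R μ)
    (hR : ∀ x y, 0 ≤ R x y) (hμ : ∀ x ∈ W, 0 ≤ μ x) {u v : V}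
    (huv : Relation.ReflTransGen (fun a b => a ∈ W ∧ b ∈ W ∧ 0 < R a b) u v)
    (hμu : 0 < μ u) : 0 < μ v := by
  induction huv with
  | refl => exact hμu
  | tail _ hbc ih => exact h.pos_of_rate_pos hR hμ hbc.1 hbc.2.1 hbc.2.2 ih

theorem StationaryOn.pos_of_irredOn {W : Finset V} (h : StationaryOn W R μ)
    (hR : ∀ x y, 0 ≤ R x y) (hμ : ∀ x ∈ W, 0 ≤ μ x) (hirr : IrredOn W R)
    (hsum : 0 < ∑ x ∈ W, μ x) {v : V} (hv : v ∈ W) : 0 < μ v := by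
  obtain ⟨u, hu, hμu⟩ : ∃ u ∈ W, 0 < μ u := by
    by_contra! hle
    exact hsum.not_ge (sum_nonpos hle)
  exact h.pos_of_reflTransGen hR hμ (hirr u hu v hv) hμu

theorem StationaryOn.sub_const_mul {W : Finset V} {ν : V → ℝ} (hμ : StationaryOn W R μ)
    (hν : StationaryOn W R ν) (c : ℝ) : StationaryOn W R fun x => μ x - c * ν x := by
  intro y hy
  simp only [sub_mul, sum_sub_distrib, mul_assoc, ← mul_sum, hμ y hy, hν y hy]

/-- Subtracting from `ν` the largest multiple of `π` that stays below it leaves a nonnegative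
stationary measure vanishing somewhere, hence everywhere. -/
theorem StationaryOn.eq_sum_mul_of_irredOn {W : Finset V} {π ν : V → ℝ}
    (hν : StationaryOn W R ν) (hπ : StationaryOn W R π) (hR : ∀ x y, 0 ≤ R x y)
    (hπnn : ∀ x ∈ W, 0 ≤ π x) (hπ1 : ∑ x ∈ W, π x = 1) (hirr : IrredOn W R) {v : V}
    (hv : v ∈ W) : ν v = (∑ x ∈ W, ν x) * π v := by
  have hπpos : ∀ x ∈ W, 0 < π x := fun x hx =>
    hπ.pos_of_irredOn hR hπnn hirr (hπ1 ▸ one_pos) hx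
  obtain ⟨w, hw, hmin⟩ := W.exists_min_image (fun x => ν x / π x) ⟨v, hv⟩
  set c := ν w / π w
  have hρnn : ∀ x ∈ W, 0 ≤ ν x - c * π x := fun x hx =>
    sub_nonneg.mpr ((le_div_iff₀ (hπpos x hx)).mp (hmin x hx))
  have hρw : ν w - c * π w = 0 := by
    rw [div_mul_cancel₀ _ (hπpos w hw).ne', sub_self]
  have hρ : ∀ x ∈ W, ν x = c * π x := by
    intro x hx
    by_contra hne
    have hρx : 0 < ν x - c * π x := (hρnn x hx).lt_of_ne' (sub_ne_zero.mpr hne)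
    exact (hν.sub_const_mul hπ c |>.pos_of_reflTransGen hR hρnn (hirr x hx w hw) hρx).ne' hρw
  rw [sum_congr rfl hρ, ← mul_sum, hπ1, mul_one, hρ v hv]

end StationaryMeasuresOn

section StationaryMeasures

variable {V : Type*} [Fintype V] {R : V → V → ℝ} {μ : V → ℝ}

theorem sum_mul_genMatrix_apply [DecidableEq V] {y : V} (hR : R y y = 0) :
    ∑ x, μ x * genMatrix R x y = ∑ x, μ x * R x y - μ y * ∑ z, R y z := by
  have h : ∀ x, genMatrix R x y = R x y - if x = y then ∑ z, R y z else 0 := by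
    intro x
    by_cases hxy : x = y
    · simp [genMatrix, hxy, hR]
    · simp [genMatrix, hxy]
  simp [h, mul_sub, sum_sub_distrib, mul_ite]

theorem Stationary.of_tendsto_transProb [DecidableEq V] (hR : ∀ x, R x x = 0) {x : V}
    (hμ : ∀ y, Tendsto (fun t => transProb R t x y) atTop (𝓝 (μ y))) : Stationary R μ := by
  intro y
  have hinv : ∀ s, ∑ z, μ z * transProb R s z y = μ y := by
    intro s
    have h := tendsto_finsetSum univ fun z _ => (hμ z).mul_const (transProb R s z y)
    simp_rw [← transProb_add] at h
    exact tendsto_nhds_unique h ((hμ y).comp (tendsto_atTop_add_const_right _ s tendsto_id))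
  have hderiv : HasDerivAt (fun s => ∑ z, μ z * transProb R s z y)
      (∑ z, μ z * genMatrix R z y) 0 :=
    HasDerivAt.fun_sum fun z _ => (hasDerivAt_transProb_zero R z y).const_mul (μ z)
  simp only [hinv] at hderiv
  have := (hasDerivAt_const (0 : ℝ) (μ y)).unique hderiv
  rw [sum_mul_genMatrix_apply (hR y)] at this
  linarith

theorem Stationary.stationaryOn_univ (h : Stationary R μ) : StationaryOn univ R μ :=
  fun y _ => h y

theorem Stationary.sum_outflow_eq_sum_inflow [DecidableEq V] (h : Stationary R μ)
    (W : Finset V) :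
    ∑ x ∈ W, ∑ z ∈ Wᶜ, μ x * R x z = ∑ x ∈ Wᶜ, ∑ z ∈ W, μ x * R x z := by
  have key : ∑ y ∈ W, ∑ x, μ x * R x y = ∑ y ∈ W, μ y * ∑ z, R y z :=
    sum_congr rfl fun y _ => h y
  rw [sum_comm, ← sum_add_sum_compl W] at key
  simp_rw [← sum_add_sum_compl W (R _), mul_add, sum_add_distrib, mul_sum] at key
  rw [sum_comm (s := W) (t := W)] at key
  linarith

theorem Stationary.inflow_eq_zero_of_closed [DecidableEq V] (h : Stationary R μ)
    (hR : ∀ x y, 0 ≤ R x y) (hμ : ∀ x, 0 ≤ μ x) {W : Finset V}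
    (hW : ∀ a ∈ W, ∀ b ∉ W, R a b = 0) {x z : V} (hx : x ∉ W) (hz : z ∈ W) :
    μ x * R x z = 0 := by
  have hnn : ∀ a b, 0 ≤ μ a * R a b := fun a b => mul_nonneg (hμ a) (hR a b)
  have hin : ∑ a ∈ Wᶜ, ∑ b ∈ W, μ a * R a b = 0 := by
    rw [← h.sum_outflow_eq_sum_inflow W]
    exact sum_eq_zero fun a ha => sum_eq_zero fun b hb => by
      rw [hW a ha b (mem_compl.mp hb), mul_zero]
  have hxrow := (sum_eq_zero_iff_of_nonneg fun a _ => sum_nonneg fun b _ => hnn a b).mp hin x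
    (mem_compl.mpr hx)
  exact (sum_eq_zero_iff_of_nonneg fun b _ => hnn x b).mp hxrow z hz

theorem Stationary.stationaryOn_of_closed [DecidableEq V] (h : Stationary R μ)
    (hR : ∀ x y, 0 ≤ R x y) (hμ : ∀ x, 0 ≤ μ x) {W : Finset V}
    (hW : ∀ a ∈ W, ∀ b ∉ W, R a b = 0) : StationaryOn W R μ := by
  intro y hy
  rw [sum_subset (subset_univ W) fun x _ hx => h.inflow_eq_zero_of_closed hR hμ hW hx hy,
    sum_subset (subset_univ W) fun z _ hz => hW y hy z hz]
  exact h y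

/-- The states leading to `y` receive no flow from outside, so by flow balance a charged state
among them sends no flow outside; a charge at `y` would then spread along the path to `z`
without leaving them. -/
theorem Stationary.eq_zero_of_not_reflTransGen [DecidableEq V] (h : Stationary R μ)
    (hR : ∀ x y, 0 ≤ R x y) (hμ : ∀ x, 0 ≤ μ x) {y z : V}
    (hyz : Relation.ReflTransGen (fun u v => 0 < R u v) y z)
    (hzy : ¬ Relation.ReflTransGen (fun u v => 0 < R u v) z y) : μ y = 0 := by
  classical
  by_contra hy
  set C := univ.filter fun w => Relation.ReflTransGen (fun u v => 0 < R u v) w y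
  have hCclosed : ∀ a ∈ Cᶜ, ∀ b ∉ Cᶜ, R a b = 0 := by
    intro a ha b hb
    simp only [C, mem_compl, mem_filter, mem_univ, true_and, not_not] at ha hb
    by_contra hab
    exact ha (.head ((hR a b).lt_of_ne' hab) hb)
  have hreach : ∀ w, Relation.ReflTransGen (fun u v => 0 < R u v) y w → w ∈ C ∧ 0 < μ w := by
    intro w hw
    induction hw with
    | refl => exact ⟨by simp [C, Relation.ReflTransGen.refl], (hμ y).lt_of_ne' hy⟩
    | @tail b c _ hbc ih =>
      obtain ⟨hb, hμb⟩ := ih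
      refine ⟨?_, h.stationaryOn_univ.pos_of_rate_pos hR (fun x _ => hμ x) (mem_univ b)
        (mem_univ c) hbc hμb⟩
      by_contra hc
      exact (mul_pos hμb hbc).ne' <| h.inflow_eq_zero_of_closed hR hμ hCclosed
        (by simpa using hb) (by simpa using hc)
  exact hzy (mem_filter.mp (hreach z hyz).1).2

end StationaryMeasures

theorem exists_limsup_abs_transProb_sub_le {V : Type*} [Fintype V] [DecidableEq V]
    {ι : Type*} {l : Filter ι} [l.NeBot] {R : ι → V → V → ℝ} {R₀ : V → V → ℝ}
    (hR : ∀ x y, Tendsto (fun n => R n x y) l (𝓝 (R₀ x y))) {ω : V → V → ℝ}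
    (hω : ∀ x y, Tendsto (fun t => transProb R₀ t x y) atTop (𝓝 (ω x y))) {ε : ℝ}
    (hε : 0 < ε) :
    ∃ T : ℝ, 0 < T ∧ ∀ x y, limsup (fun n => |transProb (R n) T x y - ω x y|) l ≤ ε := by
  have hclose : ∀ᶠ t in atTop, ∀ x y, |transProb R₀ t x y - ω x y| < ε := by
    simp only [eventually_all, ← Real.dist_eq]
    exact fun x y => Metric.tendsto_nhds.mp (hω x y) ε hε
  obtain ⟨T, hT, hTε⟩ := ((eventually_gt_atTop 0).and hclose).exists
  refine ⟨T, hT, fun x y => ?_⟩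
  rw [((tendsto_transProb_of_tendsto_rates hR T x y).sub_const (ω x y)).abs.limsup_eq]
  exact (hTε x y).le

theorem stmt11_general {V : Type*} [Fintype V] [DecidableEq V] {J : Type*}
    (Rn : ℕ → V → V → ℝ) (R0 : V → V → ℝ)
    (hRnn : ∀ n x y, 0 ≤ Rn n x y) (hRdiag : ∀ n x, Rn n x x = 0)
    (hlim : ∀ x y, Tendsto (fun n => Rn n x y) atTop (𝓝 (R0 x y)))
    (Vc : J → Finset V)
    (hclosed : ∀ j, ∀ a ∈ Vc j, ∀ b, b ∉ Vc j → R0 a b = 0)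
    (hclassirr : ∀ j, ∀ a ∈ Vc j, ∀ b ∈ Vc j,
      Relation.ReflTransGen (fun u v => u ∈ Vc j ∧ v ∈ Vc j ∧ 0 < R0 u v) a b)
    -- `πs j` is the stationary state of `𝕏` restricted to `Vc j`:
    (πs : J → V → ℝ)
    (hπsnn : ∀ j x, 0 ≤ πs j x)
    (hπs1 : ∀ j, ∑ x ∈ Vc j, πs j x = 1)
    (hπsstat : ∀ j, ∀ y ∈ Vc j,
      ∑ x ∈ Vc j, πs j x * R0 x y = πs j y * ∑ z ∈ Vc j, R0 y z)
    -- `ω(x,y) = lim_{t→∞} Q_x[𝕏_t = y]`: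
    (ω : V → V → ℝ)
    (hω : ∀ x y, Tendsto (fun t : ℝ => transProb R0 t x y) atTop (𝓝 (ω x y)))
    -- `a⁰(x,j) = lim_{t→∞} Q_x[𝕏_t ∈ Vc j]`:
    (a : V → J → ℝ)
    (ha : ∀ x j, Tendsto (fun t : ℝ => ∑ y ∈ Vc j, transProb R0 t x y)
      atTop (𝓝 (a x j))) :
    (∀ ε : ℝ, 0 < ε → ∃ T : ℝ, 0 < T ∧ ∀ x y : V,
      Filter.limsup (fun n => |transProb (Rn n) T x y - ω x y|) atTop ≤ ε) ∧
    (∀ x y : V, (∃ z, Relation.ReflTransGen (fun u v => 0 < R0 u v) y z ∧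
      ¬ Relation.ReflTransGen (fun u v => 0 < R0 u v) z y) → ω x y = 0) ∧
    (∀ j, ∀ y ∈ Vc j, ∀ x, ω x y = a x j * πs j y) := by
  have hR0nn : ∀ x y, 0 ≤ R0 x y := fun x y => ge_of_tendsto' (hlim x y) fun n => hRnn n x y
  have hR0diag : ∀ x, R0 x x = 0 := fun x =>
    tendsto_nhds_unique (hlim x x) (by simp [hRdiag])
  have hωnn : ∀ x y, 0 ≤ ω x y := fun x y => ge_of_tendsto (hω x y) <|
    (eventually_ge_atTop 0).mono fun t ht => transProb_nonneg hR0nn ht x y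
  have hstat : ∀ x, Stationary R0 (ω x) := fun x => .of_tendsto_transProb hR0diag (hω x)
  refine ⟨fun ε hε => exists_limsup_abs_transProb_sub_le hlim hω hε,
    fun x y ⟨z, hyz, hzy⟩ => (hstat x).eq_zero_of_not_reflTransGen hR0nn (hωnn x) hyz hzy,
    fun j y hy x => ?_⟩
  have hax : a x j = ∑ w ∈ Vc j, ω x w :=
    tendsto_nhds_unique (ha x j) (tendsto_finsetSum _ fun w _ => hω x w)
  rw [hax]
  exact ((hstat x).stationaryOn_of_closed hR0nn (hωnn x) (hclosed j)).eq_sum_mul_of_irredOn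
    (hπsstat j) hR0nn (fun z _ => hπsnn j z) (hπs1 j) (hclassirr j) hy

/-- chains `X^{(n)}` with rates `Rn → R0`; `𝕏` the limiting chain with
closed irreducible classes `Vc j` and stationary states `πs j`;
`ω(x,y) = lim_{t→∞} Q_x[𝕏_t = y]` and `a⁰(x,j)` the absorption probabilities.  Then for
every `ε > 0` there is `T_ε` with `limsup_n |P^n_x[X_{T_ε} = y] − ω(x,y)| ≤ ε` for all
`x, y`; moreover `ω(x,y) = 0` for `y` transient and `ω(x,y) = a⁰(x,j) πs_j(y)` for
`y ∈ Vc j`. -/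
theorem stmt11 {V : Type*} [Fintype V] [DecidableEq V] {J : Type*} [Fintype J]
    (Rn : ℕ → V → V → ℝ) (R0 : V → V → ℝ)
    (hRnn : ∀ n x y, 0 ≤ Rn n x y) (hRdiag : ∀ n x, Rn n x x = 0)
    (hirr : ∀ n, Irred (Rn n))
    (hlim : ∀ x y, Tendsto (fun n => Rn n x y) atTop (𝓝 (R0 x y)))
    (Vc : J → Finset V) (hVcne : ∀ j, (Vc j).Nonempty)
    (hVcdisj : ∀ j k, j ≠ k → Disjoint (Vc j) (Vc k))
    (hclosed : ∀ j, ∀ a ∈ Vc j, ∀ b, b ∉ Vc j → R0 a b = 0)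
    (hclassirr : ∀ j, ∀ a ∈ Vc j, ∀ b ∈ Vc j,
      Relation.ReflTransGen (fun u v => u ∈ Vc j ∧ v ∈ Vc j ∧ 0 < R0 u v) a b)
    -- every recurrent state of the limiting chain belongs to one of the classes:
    (hrecur : ∀ y : V,
      (∀ z, Relation.ReflTransGen (fun u v => 0 < R0 u v) y z →
        Relation.ReflTransGen (fun u v => 0 < R0 u v) z y) → ∃ j, y ∈ Vc j)
    -- `πs j` is the stationary state of `𝕏` restricted to `Vc j`:
    (πs : J → V → ℝ)
    (hπs0 : ∀ j x, x ∉ Vc j → πs j x = 0) (hπsnn : ∀ j x, 0 ≤ πs j x)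
    (hπs1 : ∀ j, ∑ x ∈ Vc j, πs j x = 1)
    (hπsstat : ∀ j, ∀ y ∈ Vc j,
      ∑ x ∈ Vc j, πs j x * R0 x y = πs j y * ∑ z ∈ Vc j, R0 y z)
    -- `ω(x,y) = lim_{t→∞} Q_x[𝕏_t = y]`:
    (ω : V → V → ℝ)
    (hω : ∀ x y, Tendsto (fun t : ℝ => transProb R0 t x y) atTop (𝓝 (ω x y)))
    -- `a⁰(x,j) = lim_{t→∞} Q_x[𝕏_t ∈ Vc j]`:
    (a : V → J → ℝ)
    (ha : ∀ x j, Tendsto (fun t : ℝ => ∑ y ∈ Vc j, transProb R0 t x y)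
      atTop (𝓝 (a x j))) :
    (∀ ε : ℝ, 0 < ε → ∃ T : ℝ, 0 < T ∧ ∀ x y : V,
      Filter.limsup (fun n => |transProb (Rn n) T x y - ω x y|) atTop ≤ ε) ∧
    (∀ x y : V, (∃ z, Relation.ReflTransGen (fun u v => 0 < R0 u v) y z ∧
      ¬ Relation.ReflTransGen (fun u v => 0 < R0 u v) z y) → ω x y = 0) ∧
    (∀ j, ∀ y ∈ Vc j, ∀ x, ω x y = a x j * πs j y) :=
  stmt11_general Rn R0 hRnn hRdiag hlim Vc hclosed hclassirr πs hπsnn hπs1 hπsstat ω hω a ha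
end
end

section
/- Let X_t be a reversible irreducible continuous-time Markov chain on a finite set V with generator L and stationary measure π with π(x) > 0 for all x. Define the level-two large deviations rate function I(μ) = −inf_{u>0} Σ_{x∈V} μ(x) (Lu)(x)/u(x), the infimum over positive functions u : V → (0,∞). Then for every probability measure μ on V, I(μ) = ⟨√f, (−L)√f⟩_π where f(x) = μ(x)/π(x); equivalently I(μ) = (1/2) Σ_{(x,y)} π(x) R(x,y) (√(μ(y)/π(y)) − √(μ(x)/π(x)))². -/
open Finset Filter Topology

noncomputable section

/-!
Write `μ = π g²` with `g = √(μ/π)`. For `u > 0`, detailed balance lets one symmetrise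
`∑ μ (Lu)/u + ⟨g, (-L) g⟩_π` into `½ ∑ π(x) R(x,y) (g(x) a - g(y))² / a` with `a = u(y)/u(x)`,
so the infimum is at least `-⟨g, (-L) g⟩_π`. It is attained in the limit along `u = g + ε`,
`ε → 0⁺`, since `L` kills constants and `g² / (g + ε) → g`.
-/

section DonskerVaradhan

variable {V : Type*} [Fintype V]

lemma gen_add_const (R : V → V → ℝ) (f : V → ℝ) (c : ℝ) (x : V) :
    gen R (fun y => f y + c) x = gen R f x :=
  Finset.sum_congr rfl fun y _ => by ring

lemma sum_sum_swap_of_reversible {R : V → V → ℝ} {π : V → ℝ} (hrev : Reversible R π)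
    (F : V → V → ℝ) :
    ∑ x, ∑ y, π x * R x y * F x y = ∑ x, ∑ y, π x * R x y * F y x := by
  rw [Finset.sum_comm]
  exact Finset.sum_congr rfl fun x _ => Finset.sum_congr rfl fun y _ => by rw [hrev y x]

lemma sum_sq_mul_gen_div_add_dirichlet (R : V → V → ℝ) (π g u : V → ℝ) (hu : ∀ x, 0 < u x) :
    ∑ x, π x * g x ^ 2 * (gen R u x / u x) + ∑ x, π x * (g x * -gen R g x)
      = ∑ x, ∑ y, π x * R x y * (g x ^ 2 * (u y / u x) - g x * g y) := by
  rw [← Finset.sum_add_distrib]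
  refine Finset.sum_congr rfl fun x _ => ?_
  have hux := (hu x).ne'
  simp only [gen, Finset.sum_div, Finset.mul_sum, ← Finset.sum_neg_distrib,
    ← Finset.sum_add_distrib]
  refine Finset.sum_congr rfl fun y _ => ?_
  field_simp
  ring

lemma neg_dirichlet_le_sum_sq_mul_gen_div {R : V → V → ℝ} {π : V → ℝ}
    (hR : ∀ x y, 0 ≤ R x y) (hπ : ∀ x, 0 ≤ π x) (hrev : Reversible R π)
    (g u : V → ℝ) (hu : ∀ x, 0 < u x) :
    -∑ x, π x * (g x * -gen R g x) ≤ ∑ x, π x * g x ^ 2 * (gen R u x / u x) := by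
  set F : V → V → ℝ := fun x y => g x ^ 2 * (u y / u x) - g x * g y
  have hsymm : 0 ≤ ∑ x, ∑ y, π x * R x y * (F x y + F y x) := by
    refine Finset.sum_nonneg fun x _ => Finset.sum_nonneg fun y _ => ?_
    have hux := (hu x).ne'
    have huy := (hu y).ne'
    have hsq : F x y + F y x = (g x * u y - g y * u x) ^ 2 / (u x * u y) := by
      simp only [F]
      field_simp
      ring
    rw [hsq]
    have := mul_pos (hu x) (hu y)
    have := mul_nonneg (hπ x) (hR x y)
    positivity
  have hF : 0 ≤ ∑ x, ∑ y, π x * R x y * F x y := by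
    simp only [mul_add, Finset.sum_add_distrib, ← sum_sum_swap_of_reversible hrev F] at hsymm
    linarith
  linarith [sum_sq_mul_gen_div_add_dirichlet R π g u hu]

lemma tendsto_sq_div_add_nhds_zero {a : ℝ} (ha : 0 ≤ a) :
    Tendsto (fun ε : ℝ => a ^ 2 / (a + ε)) (𝓝 0) (𝓝 a) := by
  rcases ha.eq_or_lt with rfl | ha
  · simp
  · have hlim : Tendsto (fun ε : ℝ => a ^ 2 / (a + ε)) (𝓝 0) (𝓝 (a ^ 2 / (a + 0))) :=
      tendsto_const_nhds.div (tendsto_const_nhds.add tendsto_id) (by simpa using ha.ne')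
    rwa [add_zero, sq, mul_div_cancel_right₀ _ ha.ne', ← sq] at hlim

lemma tendsto_sum_sq_mul_gen_div_add (R : V → V → ℝ) (π g : V → ℝ) (hg : ∀ x, 0 ≤ g x) :
    Tendsto (fun ε : ℝ => ∑ x, π x * g x ^ 2 * (gen R (fun y => g y + ε) x / (g x + ε)))
      (𝓝 0) (𝓝 (-∑ x, π x * (g x * -gen R g x))) := by
  simp only [gen_add_const, ← Finset.sum_neg_distrib]
  refine tendsto_finsetSum _ fun x _ => ?_
  have hlim := ((tendsto_sq_div_add_nhds_zero (hg x)).const_mul (π x)).mul_const (gen R g x)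
  convert hlim using 2 with ε <;> ring

theorem iInf_sum_sq_mul_gen_div {R : V → V → ℝ} {π : V → ℝ}
    (hR : ∀ x y, 0 ≤ R x y) (hπ : ∀ x, 0 ≤ π x) (hrev : Reversible R π)
    (g : V → ℝ) (hg : ∀ x, 0 ≤ g x) :
    ⨅ u : {u : V → ℝ // ∀ x, 0 < u x}, ∑ x, π x * g x ^ 2 * (gen R u x / (u : V → ℝ) x)
      = -∑ x, π x * (g x * -gen R g x) := by
  have : Nonempty {u : V → ℝ // ∀ x, 0 < u x} := ⟨⟨1, fun _ => one_pos⟩⟩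
  have hlower := fun u : {u : V → ℝ // ∀ x, 0 < u x} =>
    neg_dirichlet_le_sum_sq_mul_gen_div hR hπ hrev g u u.2
  refine le_antisymm ?_ (le_ciInf hlower)
  refine ge_of_tendsto ((tendsto_sum_sq_mul_gen_div_add R π g hg).mono_left
    (nhdsWithin_le_nhds (s := Set.Ioi 0))) ?_
  filter_upwards [self_mem_nhdsWithin] with ε (hε : 0 < ε)
  exact ciInf_le ⟨_, Set.forall_mem_range.2 hlower⟩
    ⟨fun y => g y + ε, fun x => add_pos_of_nonneg_of_pos (hg x) hε⟩

end DonskerVaradhan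

theorem stmt13_general {V : Type*} [Fintype V]
    (R : V → V → ℝ) (π : V → ℝ)
    (hR : ∀ x y, 0 ≤ R x y)
    (hπ : ∀ x, 0 < π x)
    (hrev : Reversible R π)
    (μ : V → ℝ) (hμ : ∀ x, 0 ≤ μ x) :
    -(⨅ u : {u : V → ℝ // ∀ x, 0 < u x}, ∑ x, μ x * (gen R (↑u) x / (↑u : V → ℝ) x))
      = ∑ x, π x * (Real.sqrt (μ x / π x) *
          (-(gen R (fun y => Real.sqrt (μ y / π y)) x))) := by
  set g : V → ℝ := fun x => Real.sqrt (μ x / π x)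
  have hμg : ∀ x, μ x = π x * g x ^ 2 := fun x => by
    rw [Real.sq_sqrt (div_nonneg (hμ x) (hπ x).le), mul_div_cancel₀ _ (hπ x).ne']
  conv_lhs => enter [1, 1, u, 2, x]; rw [hμg x]
  rw [iInf_sum_sq_mul_gen_div hR (fun x => (hπ x).le) hrev g fun x => Real.sqrt_nonneg _,
    neg_neg]

/-- Donsker–Varadhan identity: for a reversible irreducible chain,
`I(μ) = −inf_{u>0} ∑_x μ(x)(Lu)(x)/u(x) = ⟨√f, (−L)√f⟩_π` with `f = μ/π`. -/
theorem stmt13 {V : Type*} [Fintype V] [Nonempty V]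
    (R : V → V → ℝ) (π : V → ℝ)
    (hR : ∀ x y, 0 ≤ R x y)
    (hπ : ∀ x, 0 < π x) (hπ1 : ∑ x, π x = 1)
    (hirr : Irred R) (hstat : Stationary R π) (hrev : Reversible R π)
    (μ : V → ℝ) (hμ : ∀ x, 0 ≤ μ x) (hμ1 : ∑ x, μ x = 1) :
    -(⨅ u : {u : V → ℝ // ∀ x, 0 < u x}, ∑ x, μ x * (gen R (↑u) x / (↑u : V → ℝ) x))
      = ∑ x, π x * (Real.sqrt (μ x / π x) *
          (-(gen R (fun y => Real.sqrt (μ y / π y)) x))) :=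
  stmt13_general R π hR hπ hrev μ hμ
end
end

section
/- Let (I_n) be a sequence of functionals I_n : P(V) → [0,∞] on probability measures on a finite set V, given by I_n(μ) = sup_{u>0} −Σ_{x} (μ(x)/u(x)) Σ_y R_n(x,y)(u(y)−u(x)), where R_n(x,y) → ℝ_0(x,y) for all x,y. Define I^{(0)}(μ) = sup_{u>0} −Σ_x (μ(x)/u(x)) Σ_y ℝ_0(x,y)(u(y)−u(x)). Then I^{(0)} is a Γ-liminf for the sequence I_n: for every μ ∈ P(V) and every sequence μ_n → μ, liminf_n I_n(μ_n) ≥ I^{(0)}(μ). -/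
open Finset Filter Topology

noncomputable section

/-- The level-two large deviations rate function of the chain with rates `R`:
`I(μ) = sup_{u>0} −∑_x (μ(x)/u(x)) ∑_y R(x,y)(u(y)−u(x))`. -/
def rateFun {V : Type*} [Fintype V] (R : V → V → ℝ) (μ : V → ℝ) : ℝ :=
  ⨆ u : {u : V → ℝ // ∀ x, 0 < u x},
    -(∑ x, (μ x / (↑u : V → ℝ) x) * ∑ y, R x y * ((↑u : V → ℝ) y - (↑u : V → ℝ) x))

/-!
For a fixed test function `u > 0` the objective `-∑ₓ (μ x / u x) (L u)(x)` is continuous in the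
rates and the measure, so its value at `(R0, μ)` is the limit of its values at `(Rn n, μn n)`,
each of which is at most `I_n(μ_n)`; taking the supremum over `u` gives the bound. Since the
supremum lives in `ℝ`, the liminf is only meaningful once `I_n(μ_n)` is bounded above: for
nonnegative rates, `I(ν) ≤ ∑ₓ ν x ∑_y R x y`, and this converges.
-/

def rateObjective {V : Type*} [Fintype V] (R : V → V → ℝ) (ν u : V → ℝ) : ℝ :=
  -∑ x, ν x / u x * gen R u x

section RateFunction

variable {V : Type*} [Fintype V] {R : V → V → ℝ} {ν : V → ℝ}

theorem rateFun_eq_iSup_rateObjective (R : V → V → ℝ) (ν : V → ℝ) :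
    rateFun R ν = ⨆ u : {u : V → ℝ // ∀ x, 0 < u x}, rateObjective R ν u :=
  rfl

theorem neg_gen_le (hR : ∀ x y, 0 ≤ R x y) {u : V → ℝ} (hu : ∀ x, 0 ≤ u x) (x : V) :
    -gen R u x ≤ u x * ∑ y, R x y := by
  rw [gen, ← sum_neg_distrib, mul_sum]
  gcongr with y
  nlinarith [hR x y, hu y]

theorem rateObjective_le (hR : ∀ x y, 0 ≤ R x y) (hν : ∀ x, 0 ≤ ν x) {u : V → ℝ}
    (hu : ∀ x, 0 < u x) : rateObjective R ν u ≤ ∑ x, ν x * ∑ y, R x y := by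
  rw [rateObjective, ← sum_neg_distrib]
  gcongr with x
  calc -(ν x / u x * gen R u x) = ν x / u x * -gen R u x := by ring
    _ ≤ ν x / u x * (u x * ∑ y, R x y) := by
        gcongr
        · exact div_nonneg (hν x) (hu x).le
        · exact neg_gen_le hR (fun y => (hu y).le) x
    _ = ν x * ∑ y, R x y := by field_simp [(hu x).ne']

theorem bddAbove_range_rateObjective (hR : ∀ x y, 0 ≤ R x y) (hν : ∀ x, 0 ≤ ν x) :
    BddAbove (Set.range fun u : {u : V → ℝ // ∀ x, 0 < u x} => rateObjective R ν u) :=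
  ⟨_, Set.forall_mem_range.2 fun u => rateObjective_le hR hν u.2⟩

theorem rateObjective_le_rateFun (hR : ∀ x y, 0 ≤ R x y) (hν : ∀ x, 0 ≤ ν x)
    (u : {u : V → ℝ // ∀ x, 0 < u x}) : rateObjective R ν u ≤ rateFun R ν :=
  le_ciSup (bddAbove_range_rateObjective hR hν) u

instance : Nonempty {u : V → ℝ // ∀ x, 0 < u x} := ⟨⟨1, fun _ => one_pos⟩⟩

theorem rateFun_le (hR : ∀ x y, 0 ≤ R x y) (hν : ∀ x, 0 ≤ ν x) :
    rateFun R ν ≤ ∑ x, ν x * ∑ y, R x y :=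
  ciSup_le fun u => rateObjective_le hR hν u.2

theorem continuous_rateObjective (u : V → ℝ) :
    Continuous fun p : (V → V → ℝ) × (V → ℝ) => rateObjective p.1 p.2 u := by
  unfold rateObjective gen
  fun_prop

variable {ι : Type*} {l : Filter ι} {Rs : ι → V → V → ℝ} {νs : ι → V → ℝ}

theorem Filter.Tendsto.rateObjective (hR : Tendsto Rs l (𝓝 R)) (hν : Tendsto νs l (𝓝 ν))
    (u : V → ℝ) :
    Tendsto (fun i => rateObjective (Rs i) (νs i) u) l (𝓝 (rateObjective R ν u)) :=
  -- elaborated without the expected type, against which unification unfolds `rateObjective`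
  (((continuous_rateObjective u).tendsto (R, ν)).comp (hR.prodMk_nhds hν) :)

theorem isBoundedUnder_le_rateFun (hRs : ∀ i x y, 0 ≤ Rs i x y) (hνs : ∀ i x, 0 ≤ νs i x)
    (hR : Tendsto Rs l (𝓝 R)) (hν : Tendsto νs l (𝓝 ν)) :
    IsBoundedUnder (· ≤ ·) l fun i => rateFun (Rs i) (νs i) := by
  have hcont : Continuous fun p : (V → V → ℝ) × (V → ℝ) => ∑ x, p.2 x * ∑ y, p.1 x y := by
    fun_prop
  have hrate := (hcont.tendsto (R, ν)).comp (hR.prodMk_nhds hν)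
  exact hrate.isBoundedUnder_le.mono_le
    (Eventually.of_forall fun i => rateFun_le (hRs i) (hνs i))

end RateFunction

theorem stmt14_general {V : Type*} [Fintype V]
    (Rn : ℕ → V → V → ℝ) (R0 : V → V → ℝ)
    (hRnn : ∀ n x y, 0 ≤ Rn n x y)
    (hlim : ∀ x y, Tendsto (fun n => Rn n x y) atTop (𝓝 (R0 x y)))
    (μn : ℕ → V → ℝ) (μ : V → ℝ)
    (hμn : ∀ n x, 0 ≤ μn n x)
    (hconv : ∀ x, Tendsto (fun n => μn n x) atTop (𝓝 (μ x))) :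
    rateFun R0 μ ≤ Filter.liminf (fun n => rateFun (Rn n) (μn n)) atTop := by
  have hR : Tendsto Rn atTop (𝓝 R0) := tendsto_pi_nhds.2 fun x => tendsto_pi_nhds.2 (hlim x)
  have hμ : Tendsto μn atTop (𝓝 μ) := tendsto_pi_nhds.2 hconv
  rw [rateFun_eq_iSup_rateObjective]
  refine ciSup_le fun u => ?_
  have hobj := hR.rateObjective hμ u
  calc rateObjective R0 μ u = liminf (fun n => rateObjective (Rn n) (μn n) u) atTop :=
        hobj.liminf_eq.symm
    _ ≤ liminf (fun n => rateFun (Rn n) (μn n)) atTop :=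
        liminf_le_liminf
          (Eventually.of_forall fun n => rateObjective_le_rateFun (hRnn n) (hμn n) u)
          hobj.isBoundedUnder_ge
          (isBoundedUnder_le_rateFun hRnn hμn hR hμ).isCoboundedUnder_ge

/-- Γ-liminf: with `Rn → R0` pointwise and `μn → μ` in `P(V)`,
`liminf_n I_n(μ_n) ≥ I⁰(μ)`. -/
theorem stmt14 {V : Type*} [Fintype V]
    (Rn : ℕ → V → V → ℝ) (R0 : V → V → ℝ)
    (hRnn : ∀ n x y, 0 ≤ Rn n x y)
    (hlim : ∀ x y, Tendsto (fun n => Rn n x y) atTop (𝓝 (R0 x y)))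
    (μn : ℕ → V → ℝ) (μ : V → ℝ)
    (hμn : ∀ n x, 0 ≤ μn n x) (hμn1 : ∀ n, ∑ x, μn n x = 1)
    (hμ : ∀ x, 0 ≤ μ x) (hμ1 : ∑ x, μ x = 1)
    (hconv : ∀ x, Tendsto (fun n => μn n x) atTop (𝓝 (μ x))) :
    rateFun R0 μ ≤ Filter.liminf (fun n => rateFun (Rn n) (μn n)) atTop :=
  stmt14_general Rn R0 hRnn hlim μn μ hμn hconv
end
end

section
/- Let 𝕏_t be a continuous-time Markov chain on a finite set V with generator L^{(0)} (not necessarily irreducible), reversible with respect to positive measures on each of its closed irreducible classes V_1,…,V_𝔫 with stationary states π^{(1)}_1,…,π^{(1)}_𝔫. Define I^{(0)}(μ) = −inf_{u>0} Σ_x μ(x)(L^{(0)}u)(x)/u(x). Then I^{(0)}(μ) = 0 if and only if μ is a convex combination of the measures π^{(1)}_j, i.e., μ = Σ_j ω_j π^{(1)}_j for some probability vector (ω_j). -/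
open Finset Filter Topology

noncomputable section

/-! For `μ ≥ 0` the sum `∑ μ (Lu)/u` is nonnegative for every `u > 0` exactly when
`μ` is stationary. If `μ` is stationary, `log q ≤ q - 1` bounds the sum below by
`∑ μ L(log u) = 0`; conversely, `t ↦ ∑ μ (L e^{tf})/e^{tf}` has a minimum `0` at `t = 0`, and its
derivative there is `∑ μ Lf`, which therefore vanishes for every `f`. A stationary measure
charges no transient state (no mass can leave the set of states leading to a charged state), and
on a closed irreducible class `μ / π` is harmonic, hence constant by the maximum principle. -/

lemma ciInf_eq_iff_forall_le_of_apply_eq {α ι : Type*} [ConditionallyCompleteLattice α]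
    {f : ι → α} (hf : BddBelow (Set.range f)) {i₀ : ι} {a : α} (h₀ : f i₀ = a) :
    ⨅ i, f i = a ↔ ∀ i, a ≤ f i := by
  have : Nonempty ι := ⟨i₀⟩
  exact ⟨fun h i => h ▸ ciInf_le hf i,
    fun h => le_antisymm (h₀ ▸ ciInf_le hf i₀) (le_ciInf h)⟩

section Generator

variable {V : Type*} [Fintype V] {R : V → V → ℝ} {μ : V → ℝ}

lemma sum_mul_gen (f : V → ℝ) :
    ∑ x, μ x * gen R f x = ∑ y, f y * (∑ x, μ x * R x y - μ y * ∑ z, R y z) := by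
  simp only [gen, mul_sub, mul_sum, sum_sub_distrib]
  rw [sum_comm (f := fun y x => f y * (μ x * R x y))]
  congr 1
  · exact sum_congr rfl fun x _ => sum_congr rfl fun y _ => by ring
  · exact sum_congr rfl fun x _ => sum_congr rfl fun y _ => by ring

lemma stationary_iff_forall_sum_mul_gen_eq_zero :
    Stationary R μ ↔ ∀ f, ∑ x, μ x * gen R f x = 0 := by
  classical
  refine ⟨fun h f => ?_, fun h y => ?_⟩
  · rw [sum_mul_gen]
    exact sum_eq_zero fun y _ => by rw [h y, sub_self, mul_zero]
  · have := h (Pi.single y 1)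
    rw [sum_mul_gen, sum_eq_single y (fun b _ hb => by simp [hb]) (by simp)] at this
    simpa [sub_eq_zero] using this

lemma gen_div_eq {u : V → ℝ} {x : V} (hx : u x ≠ 0) :
    gen R u x / u x = ∑ y, R x y * (u y / u x - 1) := by
  rw [gen, sum_div]
  exact sum_congr rfl fun y _ => by field_simp

lemma neg_sum_le_sum_mul_gen_div (hR : ∀ x y, 0 ≤ R x y) (hμ : ∀ x, 0 ≤ μ x) {u : V → ℝ}
    (hu : ∀ x, 0 < u x) : -∑ x, μ x * ∑ y, R x y ≤ ∑ x, μ x * (gen R u x / u x) := by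
  rw [← sum_neg_distrib]
  refine sum_le_sum fun x _ => ?_
  rw [← mul_neg, gen_div_eq (hu x).ne', ← sum_neg_distrib]
  refine mul_le_mul_of_nonneg_left (sum_le_sum fun y _ => ?_) (hμ x)
  nlinarith [hR x y, mul_nonneg (hR x y) (div_pos (hu y) (hu x)).le]

lemma Stationary.sum_mul_gen_div_nonneg (hR : ∀ x y, 0 ≤ R x y) (hμ : ∀ x, 0 ≤ μ x)
    (hstat : Stationary R μ) {u : V → ℝ} (hu : ∀ x, 0 < u x) :
    0 ≤ ∑ x, μ x * (gen R u x / u x) := by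
  rw [← stationary_iff_forall_sum_mul_gen_eq_zero.1 hstat (fun y => Real.log (u y))]
  refine sum_le_sum fun x _ => mul_le_mul_of_nonneg_left ?_ (hμ x)
  rw [gen_div_eq (hu x).ne', gen]
  refine sum_le_sum fun y _ => mul_le_mul_of_nonneg_left ?_ (hR x y)
  rw [← Real.log_div (hu y).ne' (hu x).ne']
  exact Real.log_le_sub_one_of_pos (div_pos (hu y) (hu x))

lemma stationary_of_forall_sum_mul_gen_div_nonneg
    (h : ∀ u : V → ℝ, (∀ x, 0 < u x) → 0 ≤ ∑ x, μ x * (gen R u x / u x)) :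
    Stationary R μ := by
  refine stationary_iff_forall_sum_mul_gen_eq_zero.2 fun f => ?_
  set φ : ℝ → ℝ := fun t => ∑ x, μ x * ∑ y, R x y * (Real.exp (t * (f y - f x)) - 1)
  have hφ : ∀ t, φ t = ∑ x, μ x * (gen R (fun y => Real.exp (t * f y)) x / Real.exp (t * f x)) :=
    fun t => sum_congr rfl fun x _ => by
      rw [gen_div_eq (u := fun y => Real.exp (t * f y)) (Real.exp_pos _).ne']
      exact congrArg _ (sum_congr rfl fun y _ => by rw [← Real.exp_sub, ← mul_sub])
  have hmin : IsLocalMin φ 0 := Eventually.of_forall fun t => by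
    simpa [φ, hφ t] using h _ fun y => Real.exp_pos (t * f y)
  have hderiv : HasDerivAt φ (∑ x, μ x * gen R f x) 0 := by
    refine HasDerivAt.fun_sum fun x _ => (HasDerivAt.fun_sum fun y _ => ?_).const_mul (μ x)
    simpa using (((hasDerivAt_id 0).mul_const (f y - f x)).exp.sub_const 1).const_mul (R x y)
  exact hmin.hasDerivAt_eq_zero hderiv

lemma stationary_iff_forall_sum_mul_gen_div_nonneg (hR : ∀ x y, 0 ≤ R x y)
    (hμ : ∀ x, 0 ≤ μ x) :
    Stationary R μ ↔ ∀ u : V → ℝ, (∀ x, 0 < u x) → 0 ≤ ∑ x, μ x * (gen R u x / u x) :=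
  ⟨fun h _ hu => h.sum_mul_gen_div_nonneg hR hμ hu, stationary_of_forall_sum_mul_gen_div_nonneg⟩

end Generator

lemma eq_of_genOn_eq_zero {V : Type*} [Fintype V] [DecidableEq V] {R : V → V → ℝ}
    (hR : ∀ x y, 0 ≤ R x y) {W : Finset V} {h : V → ℝ} (hharm : ∀ y ∈ W, genOn W R h y = 0)
    (hirr : ∀ a ∈ W, ∀ b ∈ W,
      Relation.ReflTransGen (fun u v => u ∈ W ∧ v ∈ W ∧ 0 < R u v) a b)
    {a b : V} (ha : a ∈ W) (hb : b ∈ W) : h a = h b := by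
  obtain ⟨m, hm, hmax⟩ := W.exists_max_image h ⟨a, ha⟩
  have hstep : ∀ c d, c ∈ W ∧ d ∈ W ∧ 0 < R c d → h c = h m → h d = h m := by
    rintro c d ⟨hc, hd, hcd⟩ hcm
    have hterm : ∀ y ∈ W, R c y * (h y - h c) ≤ 0 := fun y hy =>
      mul_nonpos_of_nonneg_of_nonpos (hR c y) (by linarith [hmax y hy])
    have := (sum_eq_zero_iff_of_nonpos hterm).1 (hharm c hc) d hd
    linarith [(mul_eq_zero.1 this).resolve_left hcd.ne', hmax d hd]
  have hconst : ∀ c ∈ W, h c = h m := fun c hc => by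
    induction hirr m hm c hc with
    | refl => rfl
    | tail _ hcd ih => exact hstep _ _ hcd (ih hcd.1)
  rw [hconst a ha, hconst b hb]

namespace Stationary

variable {V : Type*} [Fintype V] {R : V → V → ℝ} {μ : V → ℝ}

lemma pos_of_rate_pos (hR : ∀ x y, 0 ≤ R x y) (hμ : ∀ x, 0 ≤ μ x) (hstat : Stationary R μ)
    {a b : V} (ha : 0 < μ a) (hab : 0 < R a b) : 0 < μ b := by
  refine (hμ b).lt_of_ne' fun hb => (mul_pos ha hab).ne' (le_antisymm ?_ (mul_pos ha hab).le)
  calc μ a * R a b ≤ ∑ x, μ x * R x b :=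
        single_le_sum (fun x _ => mul_nonneg (hμ x) (hR x b)) (mem_univ a)
    _ = 0 := by rw [hstat b, hb, zero_mul]

lemma mul_rate_eq_zero_of_mem_of_not_mem (hR : ∀ x y, 0 ≤ R x y) (hμ : ∀ x, 0 ≤ μ x)
    (hstat : Stationary R μ) {A : Finset V} (hA : ∀ x y, 0 < R x y → y ∈ A → x ∈ A)
    {y z : V} (hy : y ∈ A) (hz : z ∉ A) : μ y * R y z = 0 := by
  classical
  have hin : ∀ y ∈ A, ∑ x, μ x * R x y = ∑ x ∈ A, μ x * R x y := fun y hy =>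
    (sum_subset (subset_univ A) fun x _ hx => by
      rw [((hR x y).eq_or_lt.resolve_right fun h => hx (hA x y h hy)).symm, mul_zero]).symm
  have hout : ∑ y ∈ A, ∑ z ∈ Aᶜ, μ y * R y z = 0 := by
    have := sum_congr rfl fun y (_ : y ∈ A) => hstat y
    simp only [mul_sum, ← sum_add_sum_compl A (fun z => μ _ * R _ z)] at this
    rw [sum_congr rfl hin, sum_comm, sum_add_distrib] at this
    linarith
  have hnonneg : ∀ y z, 0 ≤ μ y * R y z := fun y z => mul_nonneg (hμ y) (hR y z)
  exact (sum_eq_zero_iff_of_nonneg fun z _ => hnonneg y z).1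
    ((sum_eq_zero_iff_of_nonneg fun y _ => sum_nonneg fun z _ => hnonneg y z).1 hout y hy) z
    (mem_compl.2 hz)

lemma reflTransGen_swap_of_pos (hR : ∀ x y, 0 ≤ R x y) (hμ : ∀ x, 0 ≤ μ x)
    (hstat : Stationary R μ) {a c : V} (ha : 0 < μ a)
    (hac : Relation.ReflTransGen (fun u v => 0 < R u v) a c) :
    Relation.ReflTransGen (fun u v => 0 < R u v) c a := by
  classical
  set A := univ.filter fun w => Relation.ReflTransGen (fun u v => 0 < R u v) w a
  have hA : ∀ x y, 0 < R x y → y ∈ A → x ∈ A := fun x y hxy hy => by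
    simp only [A, mem_filter, mem_univ, true_and] at hy ⊢
    exact .head hxy hy
  suffices 0 < μ c ∧ c ∈ A by simpa [A] using this.2
  induction hac with
  | refl => exact ⟨ha, by simp [A, Relation.ReflTransGen.refl]⟩
  | @tail b c _ hbc ih =>
    refine ⟨hstat.pos_of_rate_pos hR hμ ih.1 hbc, by_contra fun hc => ?_⟩
    exact (mul_pos ih.1 hbc).ne' (hstat.mul_rate_eq_zero_of_mem_of_not_mem hR hμ hA ih.2 hc)

lemma eq_zero_of_transient (hR : ∀ x y, 0 ≤ R x y) (hμ : ∀ x, 0 ≤ μ x)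
    (hstat : Stationary R μ) {y z : V} (hyz : Relation.ReflTransGen (fun u v => 0 < R u v) y z)
    (hzy : ¬ Relation.ReflTransGen (fun u v => 0 < R u v) z y) : μ y = 0 :=
  (hμ y).eq_of_not_lt' fun hy => hzy (hstat.reflTransGen_swap_of_pos hR hμ hy hyz)

lemma genOn_div_eq_zero [DecidableEq V] (hstat : Stationary R μ) {W : Finset V} {π : V → ℝ}
    (hπ : ∀ x ∈ W, 0 < π x) (hrev : ∀ x ∈ W, ∀ y ∈ W, π x * R x y = π y * R y x)
    (hclosed : ∀ a ∈ W, ∀ b, b ∉ W → R a b = 0) (hin : ∀ x, x ∉ W → ∀ y ∈ W, μ x * R x y = 0)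
    {y : V} (hy : y ∈ W) : genOn W R (fun x => μ x / π x) y = 0 := by
  have hflux : π y * genOn W R (fun x => μ x / π x) y
      = ∑ x ∈ W, μ x * R x y - μ y * ∑ z ∈ W, R y z := by
    rw [genOn, mul_sum, mul_sum, ← sum_sub_distrib]
    refine sum_congr rfl fun x hx => ?_
    have hx' : π y * R y x * (μ x / π x) = μ x * R x y := by
      rw [← hrev x hx y hy]; field_simp [(hπ x hx).ne']
    have hy' : π y * (μ y / π y) = μ y := mul_div_cancel₀ _ (hπ y hy).ne'
    linear_combination hx' - R y x * hy'
  have hstat_y := hstat y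
  rw [← sum_subset (subset_univ W) fun x _ hx => hin x hx y hy,
    ← sum_subset (subset_univ W) fun z _ hz => hclosed y hy z hz] at hstat_y
  rw [hstat_y, sub_self] at hflux
  exact (mul_eq_zero.1 hflux).resolve_left (hπ y hy).ne'

lemma eq_mul_of_mem_class (hR : ∀ x y, 0 ≤ R x y) (hstat : Stationary R μ) {W : Finset V}
    (hirr : ∀ a ∈ W, ∀ b ∈ W,
      Relation.ReflTransGen (fun u v => u ∈ W ∧ v ∈ W ∧ 0 < R u v) a b)
    (hclosed : ∀ a ∈ W, ∀ b, b ∉ W → R a b = 0) {π : V → ℝ} (hπ : ∀ x ∈ W, 0 < π x)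
    (hrev : ∀ x ∈ W, ∀ y ∈ W, π x * R x y = π y * R y x)
    (hin : ∀ x, x ∉ W → ∀ y ∈ W, μ x * R x y = 0) {a : V} (ha : a ∈ W) :
    ∀ x ∈ W, μ x = μ a / π a * π x := by
  classical
  intro x hx
  rw [eq_of_genOn_eq_zero hR (fun y hy => hstat.genOn_div_eq_zero hπ hrev hclosed hin hy) hirr
    ha hx, div_mul_cancel₀ _ (hπ x hx).ne']

end Stationary

lemma stationary_of_reversible_on_closed {V : Type*} [Fintype V] {R : V → V → ℝ} {W : Finset V}
    {π : V → ℝ} (hπ0 : ∀ x, x ∉ W → π x = 0) (hclosed : ∀ a ∈ W, ∀ b, b ∉ W → R a b = 0)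
    (hrev : ∀ x ∈ W, ∀ y ∈ W, π x * R x y = π y * R y x) : Stationary R π := by
  intro y
  rw [← sum_subset (subset_univ W) fun x _ hx => by rw [hπ0 x hx, zero_mul]]
  by_cases hy : y ∈ W
  · rw [← sum_subset (subset_univ W) fun z _ hz => hclosed y hy z hz, mul_sum]
    exact sum_congr rfl fun x hx => hrev x hx y hy
  · rw [hπ0 y hy, zero_mul]
    exact sum_eq_zero fun x hx => by rw [hclosed x hx y hy, mul_zero]

lemma Stationary.sum_mul {V J : Type*} [Fintype V] [Fintype J] {R : V → V → ℝ}
    {π : J → V → ℝ} (h : ∀ j, Stationary R (π j)) (ω : J → ℝ) :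
    Stationary R (fun x => ∑ j, ω j * π j x) := by
  intro y
  simp only [Finset.sum_mul]
  rw [sum_comm]
  exact sum_congr rfl fun j _ => by simp only [mul_assoc, ← mul_sum, h j y]

lemma eq_sum_mul_of_eq_mul_on_disjoint {V J : Type*} [Fintype J] {W : J → Finset V}
    (hdisj : ∀ j k, j ≠ k → Disjoint (W j) (W k)) {π : J → V → ℝ}
    (hπ0 : ∀ j x, x ∉ W j → π j x = 0) {μ : V → ℝ} {c : J → ℝ}
    (hoff : ∀ x, (∀ j, x ∉ W j) → μ x = 0) (hon : ∀ j, ∀ x ∈ W j, μ x = c j * π j x) (x : V) :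
    μ x = ∑ j, c j * π j x := by
  classical
  by_cases hx : ∃ j, x ∈ W j
  · obtain ⟨j, hj⟩ := hx
    rw [sum_eq_single j (fun k _ hk => by
      rw [hπ0 k x (disjoint_left.1 (hdisj j k hk.symm) hj), mul_zero]) (by simp), hon j x hj]
  · rw [not_exists] at hx
    rw [hoff x hx]
    exact (sum_eq_zero fun j _ => by rw [hπ0 j x (hx j), mul_zero]).symm

lemma mul_rate_eq_zero_of_not_mem {V J : Type*} {W : J → Finset V}
    (hdisj : ∀ j k, j ≠ k → Disjoint (W j) (W k)) {R : V → V → ℝ}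
    (hclosed : ∀ j, ∀ a ∈ W j, ∀ b, b ∉ W j → R a b = 0) {μ : V → ℝ}
    (hoff : ∀ x, (∀ j, x ∉ W j) → μ x = 0) (j : J) :
    ∀ x, x ∉ W j → ∀ y ∈ W j, μ x * R x y = 0 := by
  intro x hx y hy
  by_cases hk : ∃ k, x ∈ W k
  · obtain ⟨k, hk⟩ := hk
    have hyk := disjoint_right.1 (hdisj k j fun hkj => hx (hkj ▸ hk)) hy
    rw [hclosed k x hk y hyk, mul_zero]
  · rw [hoff x (not_exists.1 hk), zero_mul]

lemma sum_eq_one_of_eq_sum_mul {V J : Type*} [Fintype V] [Fintype J] {π : J → V → ℝ}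
    {μ : V → ℝ} {c : J → ℝ} (hπ1 : ∀ j, ∑ x, π j x = 1) (hμ1 : ∑ x, μ x = 1)
    (hμ : ∀ x, μ x = ∑ j, c j * π j x) : ∑ j, c j = 1 := by
  rw [← hμ1, sum_congr rfl fun x _ => hμ x, sum_comm]
  simp [← mul_sum, hπ1]

theorem stmt15_general {V : Type*} [Fintype V] {J : Type*} [Fintype J]
    (R0 : V → V → ℝ) (hR0 : ∀ x y, 0 ≤ R0 x y)
    (Vc : J → Finset V) (hVcne : ∀ j, (Vc j).Nonempty)
    (hVcdisj : ∀ j k, j ≠ k → Disjoint (Vc j) (Vc k))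
    (hclosed : ∀ j, ∀ a ∈ Vc j, ∀ b, b ∉ Vc j → R0 a b = 0)
    (hclassirr : ∀ j, ∀ a ∈ Vc j, ∀ b ∈ Vc j,
      Relation.ReflTransGen (fun u v => u ∈ Vc j ∧ v ∈ Vc j ∧ 0 < R0 u v) a b)
    -- states outside the classes are transient:
    (htrans : ∀ y : V, (∀ j, y ∉ Vc j) →
      ∃ z, Relation.ReflTransGen (fun u v => 0 < R0 u v) y z ∧
        ¬ Relation.ReflTransGen (fun u v => 0 < R0 u v) z y)
    -- `πs j` is the stationary state on `Vc j`, and the restricted chain is reversible: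
    (πs : J → V → ℝ)
    (hπs0 : ∀ j x, x ∉ Vc j → πs j x = 0)
    (hπspos : ∀ j, ∀ x ∈ Vc j, 0 < πs j x)
    (hπs1 : ∀ j, ∑ x ∈ Vc j, πs j x = 1)
    (hπsrev : ∀ j, ∀ x ∈ Vc j, ∀ y ∈ Vc j, πs j x * R0 x y = πs j y * R0 y x)
    (μ : V → ℝ) (hμ : ∀ x, 0 ≤ μ x) (hμ1 : ∑ x, μ x = 1) :
    -(⨅ u : {u : V → ℝ // ∀ x, 0 < u x},
        ∑ x, μ x * (gen R0 (↑u) x / (↑u : V → ℝ) x)) = 0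
      ↔ ∃ ω : J → ℝ, (∀ j, 0 ≤ ω j) ∧ (∑ j, ω j = 1) ∧
          ∀ x, μ x = ∑ j, ω j * πs j x := by
  have hbdd : BddBelow (Set.range fun u : {u : V → ℝ // ∀ x, 0 < u x} =>
      ∑ x, μ x * (gen R0 (↑u) x / (↑u : V → ℝ) x)) :=
    ⟨_, Set.forall_mem_range.2 fun u => neg_sum_le_sum_mul_gen_div hR0 hμ u.2⟩
  rw [neg_eq_zero, ciInf_eq_iff_forall_le_of_apply_eq hbdd (i₀ := ⟨1, fun _ => one_pos⟩)
    (by simp [gen]), Subtype.forall, ← stationary_iff_forall_sum_mul_gen_div_nonneg hR0 hμ]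
  constructor
  · intro hstat
    have hoff : ∀ x, (∀ j, x ∉ Vc j) → μ x = 0 := fun x hx =>
      let ⟨_, hxz, hzx⟩ := htrans x hx
      hstat.eq_zero_of_transient hR0 hμ hxz hzx
    choose a ha using hVcne
    have hμeq := eq_sum_mul_of_eq_mul_on_disjoint hVcdisj hπs0 hoff fun j =>
      hstat.eq_mul_of_mem_class hR0 (hclassirr j) (hclosed j) (hπspos j) (hπsrev j)
        (mul_rate_eq_zero_of_not_mem hVcdisj hclosed hoff j) (ha j)
    have hπ1 : ∀ j, ∑ x, πs j x = 1 := fun j =>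
      (sum_subset (subset_univ _) fun x _ hx => hπs0 j x hx).symm.trans (hπs1 j)
    exact ⟨_, fun j => div_nonneg (hμ _) (hπspos j _ (ha j)).le,
      sum_eq_one_of_eq_sum_mul hπ1 hμ1 hμeq, hμeq⟩
  · rintro ⟨ω, -, -, hω⟩
    rw [funext hω]
    exact Stationary.sum_mul
      (fun j => stationary_of_reversible_on_closed (hπs0 j) (hclosed j) (hπsrev j)) ω

/-- for a (not necessarily irreducible) chain on `V` with generator `L⁰`,
reversible on each of its closed irreducible classes `Vc j` with stationary states
`πs j`, the functional `I⁰(μ) = −inf_{u>0} ∑_x μ(x)(L⁰u)(x)/u(x)` vanishes if and only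
if `μ` is a convex combination of the measures `πs j`. -/
theorem stmt15 {V : Type*} [Fintype V] [Nonempty V] {J : Type*} [Fintype J]
    (R0 : V → V → ℝ) (hR0 : ∀ x y, 0 ≤ R0 x y)
    (Vc : J → Finset V) (hVcne : ∀ j, (Vc j).Nonempty)
    (hVcdisj : ∀ j k, j ≠ k → Disjoint (Vc j) (Vc k))
    (hclosed : ∀ j, ∀ a ∈ Vc j, ∀ b, b ∉ Vc j → R0 a b = 0)
    (hclassirr : ∀ j, ∀ a ∈ Vc j, ∀ b ∈ Vc j,
      Relation.ReflTransGen (fun u v => u ∈ Vc j ∧ v ∈ Vc j ∧ 0 < R0 u v) a b)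
    -- states outside the classes are transient:
    (htrans : ∀ y : V, (∀ j, y ∉ Vc j) →
      ∃ z, Relation.ReflTransGen (fun u v => 0 < R0 u v) y z ∧
        ¬ Relation.ReflTransGen (fun u v => 0 < R0 u v) z y)
    -- `πs j` is the stationary state on `Vc j`, and the restricted chain is reversible:
    (πs : J → V → ℝ)
    (hπs0 : ∀ j x, x ∉ Vc j → πs j x = 0)
    (hπspos : ∀ j, ∀ x ∈ Vc j, 0 < πs j x)
    (hπs1 : ∀ j, ∑ x ∈ Vc j, πs j x = 1)
    (hπsrev : ∀ j, ∀ x ∈ Vc j, ∀ y ∈ Vc j, πs j x * R0 x y = πs j y * R0 y x)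
    (μ : V → ℝ) (hμ : ∀ x, 0 ≤ μ x) (hμ1 : ∑ x, μ x = 1) :
    -(⨅ u : {u : V → ℝ // ∀ x, 0 < u x},
        ∑ x, μ x * (gen R0 (↑u) x / (↑u : V → ℝ) x)) = 0
      ↔ ∃ ω : J → ℝ, (∀ j, 0 ≤ ω j) ∧ (∑ j, ω j = 1) ∧
          ∀ x, μ x = ∑ j, ω j * πs j x :=
  stmt15_general R0 hR0 Vc hVcne hVcdisj hclosed hclassirr htrans πs hπs0 hπspos hπs1 hπsrev μ hμ
    hμ1
end
end
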